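/- arXiv:0910.5262 — 4 statements merged into one kernel-verified Lean document; each statement's English description precedes it below -/
import Mathlib

section
/- For g ≥ 3, the coinvariants of S²L under the action of SL(g,ℤ) vanish: H₀(SL(g,ℤ); S²L) = (S²L)_{SL(g,ℤ)} = 0, where S²L is the second symmetric power of the standard SL(g,ℤ)-module L = ℤ^g. Equivalently, the additive group of symmetric g×g integer matrices, with SL(g,ℤ) acting by B ↦ A B ᵗA, is generated by elements of the form A·B - B. -/
open Matrix

namespace Stmt6Aux

variable {g : ℕ}

/-- The generating set. -/
def genSet (g : ℕ) : Set (Matrix (Fin g) (Fin g) ℤ) :=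
  {x : Matrix (Fin g) (Fin g) ℤ |
    ∃ (A : Matrix.SpecialLinearGroup (Fin g) ℤ) (B : Matrix (Fin g) (Fin g) ℤ),
      B.IsSymm ∧ x = (A : Matrix (Fin g) (Fin g) ℤ) * B *
        (A : Matrix (Fin g) (Fin g) ℤ)ᵀ - B}

lemma transpose_E (i j : Fin g) (c : ℤ) :
    (single i j c)ᵀ = single j i c := by
  ext a b
  simp [single, and_comm]

lemma mem1 {i j : Fin g} (hij : i ≠ j) :
    single i i (1:ℤ) + single i j 1 + single j i 1 ∈
      AddSubgroup.closure (genSet g) := by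
  have hd : (Matrix.transvection i j (1:ℤ)).det = 1 :=
    Matrix.det_transvection_of_ne i j hij 1
  set A : Matrix.SpecialLinearGroup (Fin g) ℤ := ⟨Matrix.transvection i j 1, hd⟩
  have hB : (single j j (1:ℤ)).IsSymm := transpose_E j j 1
  have h : (A : Matrix (Fin g) (Fin g) ℤ) * single j j 1 *
      (A : Matrix (Fin g) (Fin g) ℤ)ᵀ - single j j 1 ∈
      AddSubgroup.closure (genSet g) :=
    AddSubgroup.subset_closure ⟨A, single j j 1, hB, rfl⟩
  have key : (A : Matrix (Fin g) (Fin g) ℤ) * single j j 1 *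
      (A : Matrix (Fin g) (Fin g) ℤ)ᵀ - single j j 1 =
      single i i 1 + single i j 1 + single j i 1 := by
    show (Matrix.transvection i j 1) * _ * (Matrix.transvection i j 1)ᵀ - _ = _
    simp only [Matrix.transvection, transpose_add, transpose_one, transpose_E,
      Matrix.mul_add, Matrix.add_mul, Matrix.one_mul, Matrix.mul_one,
      single_mul_single_same, mul_one]
    abel
  rwa [key] at h

lemma mem2 {i k : Fin g} (hg : 3 ≤ g) (hik : i ≠ k) :
    single i k (1:ℤ) + single k i 1 ∈
      AddSubgroup.closure (genSet g) := by
  -- find j ≠ i, j ≠ k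
  have hne : (({i, k}ᶜ : Finset (Fin g))).Nonempty := by
    rw [← Finset.card_pos, Finset.card_compl]
    have h1 : ({i, k} : Finset (Fin g)).card ≤ 2 := by
      apply le_trans (Finset.card_insert_le _ _); simp
    simp only [Fintype.card_fin]
    omega
  obtain ⟨j, hj⟩ := hne
  simp only [Finset.mem_compl, Finset.mem_insert, Finset.mem_singleton, not_or] at hj
  obtain ⟨hji, hjk⟩ := hj
  have hd : (Matrix.transvection i j (1:ℤ)).det = 1 :=
    Matrix.det_transvection_of_ne i j (Ne.symm hji) 1
  set A : Matrix.SpecialLinearGroup (Fin g) ℤ := ⟨Matrix.transvection i j 1, hd⟩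
  set B : Matrix (Fin g) (Fin g) ℤ := single j k 1 + single k j 1 with hBdef
  have hB : B.IsSymm := by
    unfold B
    rw [Matrix.IsSymm, transpose_add, transpose_E, transpose_E, add_comm]
  have h : (A : Matrix (Fin g) (Fin g) ℤ) * B *
      (A : Matrix (Fin g) (Fin g) ℤ)ᵀ - B ∈ AddSubgroup.closure (genSet g) :=
    AddSubgroup.subset_closure ⟨A, B, hB, rfl⟩
  have key : (A : Matrix (Fin g) (Fin g) ℤ) * B *
      (A : Matrix (Fin g) (Fin g) ℤ)ᵀ - B =
      single i k 1 + single k i 1 := by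
    show (Matrix.transvection i j 1) * B * (Matrix.transvection i j 1)ᵀ - B = _
    unfold B
    simp only [Matrix.transvection, transpose_add, transpose_one, transpose_E,
      Matrix.mul_add, Matrix.add_mul, Matrix.one_mul, Matrix.mul_one,
      single_mul_single_same, single_mul_single_of_ne _ _ _ _ hjk,
      single_mul_single_of_ne _ _ _ _ (Ne.symm hjk), mul_one,
      Matrix.zero_mul, Matrix.mul_zero]
    abel
  rwa [key] at h

lemma mem_diag (hg : 3 ≤ g) (i : Fin g) :
    single i i (1:ℤ) ∈ AddSubgroup.closure (genSet g) := by
  have hne : (({i}ᶜ : Finset (Fin g))).Nonempty := by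
    rw [← Finset.card_pos, Finset.card_compl]
    simp only [Fintype.card_fin, Finset.card_singleton]
    omega
  obtain ⟨j, hj⟩ := hne
  simp only [Finset.mem_compl, Finset.mem_singleton] at hj
  have h1 := mem1 (Ne.symm hj)
  have h2 := mem2 hg (Ne.symm hj)
  have := sub_mem h1 h2
  simpa using this


section Decomp

variable {g : ℕ}

lemma decomp (C : Matrix (Fin g) (Fin g) ℤ) (hC : C.IsSymm) :
    (∑ i, ∑ j, if i ≤ j then C i j • (single i j (1:ℤ) + single j i 1) else 0)
      = C + ∑ i, C i i • single i i (1:ℤ) := by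
  have step1 : ∀ i j : Fin g,
      (if i ≤ j then C i j • (single i j (1:ℤ) + single j i 1) else 0)
      = (if i ≤ j then C i j • single i j (1:ℤ) else 0)
        + (if i ≤ j then C i j • single j i (1:ℤ) else 0) := by
    intro i j; split <;> simp [smul_add]
  calc (∑ i, ∑ j, if i ≤ j then C i j • (single i j (1:ℤ) + single j i 1) else 0)
      = (∑ i, ∑ j, (if i ≤ j then C i j • single i j (1:ℤ) else 0))
        + ∑ i, ∑ j, (if i ≤ j then C i j • single j i (1:ℤ) else 0) := by
        simp_rw [step1, Finset.sum_add_distrib]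
    _ = (∑ i, ∑ j, (if i ≤ j then C i j • single i j (1:ℤ) else 0))
        + ∑ i, ∑ j, (if j ≤ i then C i j • single i j (1:ℤ) else 0) := by
        congr 1
        rw [Finset.sum_comm]
        refine Finset.sum_congr rfl fun i _ => Finset.sum_congr rfl fun j _ => ?_
        rw [hC.apply i j]
    _ = ∑ i, ∑ j, ((C i j • single i j (1:ℤ))
        + if i = j then C i j • single i j (1:ℤ) else 0) := by
        simp_rw [← Finset.sum_add_distrib]
        refine Finset.sum_congr rfl fun i _ => Finset.sum_congr rfl fun j _ => ?_
        rcases lt_trichotomy i j with h | h | h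
        · simp [h.le, h.ne, not_le.2 h]
        · simp [h]
        · simp [h.le, (h.ne).symm, not_le.2 h]
    _ = C + ∑ i, C i i • single i i (1:ℤ) := by
        simp_rw [Finset.sum_add_distrib, Finset.sum_ite_eq]
        congr 1
        · conv_rhs => rw [matrix_eq_sum_single C]
          refine Finset.sum_congr rfl fun i _ => Finset.sum_congr rfl fun j _ => ?_
          rw [smul_single, smul_eq_mul, mul_one]
        · simp

end Decomp


theorem main (g : ℕ) (hg : 3 ≤ g) (C : Matrix (Fin g) (Fin g) ℤ) (hC : C.IsSymm) :
    C ∈ AddSubgroup.closure (genSet g) := by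
  have hmemP : ∀ i j : Fin g,
      (single i j (1:ℤ) + single j i 1) ∈ AddSubgroup.closure (genSet g) := by
    intro i j
    rcases eq_or_ne i j with rfl | h
    · exact add_mem (mem_diag hg i) (mem_diag hg i)
    · exact mem2 hg h
  have key : C = (∑ i, ∑ j, if i ≤ j then
        C i j • (single i j (1:ℤ) + single j i 1) else 0)
      - ∑ i, C i i • single i i (1:ℤ) := by
    rw [decomp C hC]; abel
  rw [key]
  refine sub_mem (AddSubgroup.sum_mem _ fun i _ => AddSubgroup.sum_mem _ fun j _ => ?_)
    (AddSubgroup.sum_mem _ fun i _ => zsmul_mem (mem_diag hg i) _)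
  split
  · exact zsmul_mem (hmemP i j) _
  · exact zero_mem _

end Stmt6Aux

/-- For `g ≥ 3` the coinvariants of `S²L` under `SL(g,ℤ)` vanish: identifying `S²L` with
symmetric `g×g` integer matrices (with action `B ↦ A B ᵗA`), every symmetric matrix lies in
the subgroup generated by the elements `A·B - B`. -/
theorem stmt6 (g : ℕ) (hg : 3 ≤ g) :
    ∀ C : Matrix (Fin g) (Fin g) ℤ, C.IsSymm →
      C ∈ AddSubgroup.closure
        {x : Matrix (Fin g) (Fin g) ℤ |
          ∃ (A : Matrix.SpecialLinearGroup (Fin g) ℤ) (B : Matrix (Fin g) (Fin g) ℤ),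
            B.IsSymm ∧ x = (A : Matrix (Fin g) (Fin g) ℤ) * B *
              (A : Matrix (Fin g) (Fin g) ℤ)ᵀ - B} := by
  intro C hC
  exact Stmt6Aux.main g hg C hC
end

section
/- For g ≥ 4, the coinvariants of Λ²(S²L) under the action of SL(g,ℤ) are trivial: (Λ²(S²L))_{SL(g,ℤ)} = 0, where L = ℤ^g is the standard module and the action on Λ²(S²L) is the diagonal action induced from S²L. -/
open Matrix

variable (R : Type) [CommRing R]

/-- The module of symmetric `g×g` matrices over `R` (the model for `S²L`, resp. `S²(L*)`). -/
def symMod (g : ℕ) : Submodule R (Matrix (Fin g) (Fin g) R) where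
  carrier := {B | B.IsSymm}
  add_mem' := by
    intro a b ha hb
    show (a + b)ᵀ = a + b
    rw [Matrix.transpose_add, ha, hb]
  zero_mem' := by
    show (0 : Matrix (Fin g) (Fin g) R)ᵀ = 0
    simp
  smul_mem' := by
    intro c a ha
    show (c • a)ᵀ = c • a
    rw [Matrix.transpose_smul, ha]

variable {R}

/-- Conjugation `B ↦ A B ᵗA` as a linear endomorphism of the symmetric matrices. -/
def conjLin {g : ℕ} (A : Matrix (Fin g) (Fin g) R) : symMod R g →ₗ[R] symMod R g where
  toFun B := ⟨A * (B : Matrix (Fin g) (Fin g) R) * Aᵀ, by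
    have hB : (B : Matrix (Fin g) (Fin g) R)ᵀ = B := B.2
    show (A * (B : Matrix (Fin g) (Fin g) R) * Aᵀ)ᵀ = A * (B : Matrix (Fin g) (Fin g) R) * Aᵀ
    rw [Matrix.transpose_mul, Matrix.transpose_mul, Matrix.transpose_transpose, hB,
      Matrix.mul_assoc]⟩
  map_add' B C := by
    apply Subtype.ext
    show A * ((B : Matrix (Fin g) (Fin g) R) + C) * Aᵀ = _
    simp [Matrix.mul_add, Matrix.add_mul]
  map_smul' c B := by
    apply Subtype.ext
    show A * (c • (B : Matrix (Fin g) (Fin g) R)) * Aᵀ = _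
    simp [Matrix.mul_smul, Matrix.smul_mul]

lemma conjLin_mul {g : ℕ} (M N : Matrix (Fin g) (Fin g) R) :
    conjLin (M * N) = (conjLin M).comp (conjLin N) := by
  apply LinearMap.ext
  intro B
  apply Subtype.ext
  show (M * N) * (B : Matrix (Fin g) (Fin g) R) * (M * N)ᵀ
      = M * (N * (B : Matrix (Fin g) (Fin g) R) * Nᵀ) * Mᵀ
  rw [Matrix.transpose_mul]
  simp [Matrix.mul_assoc]

lemma conjLin_one {g : ℕ} : conjLin (1 : Matrix (Fin g) (Fin g) R) = LinearMap.id := by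
  apply LinearMap.ext
  intro B
  apply Subtype.ext
  show (1 : Matrix (Fin g) (Fin g) R) * B * (1 : Matrix (Fin g) (Fin g) R)ᵀ = B
  simp

namespace Stmt7Aux

open Matrix ExteriorAlgebra

variable {g : ℕ}

lemma transpose_std (i j : Fin g) (c : ℤ) :
    (Matrix.single i j c)ᵀ = Matrix.single j i c := by
  ext a b
  simp [Matrix.single, Matrix.transpose_apply, and_comm]

/-- Diagonal basis element `E_ii` of the symmetric matrices. -/
def Dm (i : Fin g) : symMod ℤ g :=
  ⟨Matrix.single i i 1, by
    show _ᵀ = _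
    rw [transpose_std]⟩

/-- Off-diagonal basis element `E_ij + E_ji` of the symmetric matrices. -/
def Sm (i j : Fin g) : symMod ℤ g :=
  ⟨Matrix.single i j 1 + Matrix.single j i 1, by
    show _ᵀ = _
    rw [Matrix.transpose_add, transpose_std, transpose_std, add_comm]⟩

lemma Sm_comm (i j : Fin g) : Sm i j = Sm j i := by
  apply Subtype.ext
  show Matrix.single i j 1 + Matrix.single j i 1 = _
  exact add_comm _ _

lemma Dm_val (i : Fin g) : (Dm i : Matrix (Fin g) (Fin g) ℤ) = Matrix.single i i 1 := rfl

lemma Sm_val (i j : Fin g) : (Sm i j : Matrix (Fin g) (Fin g) ℤ)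
    = Matrix.single i j 1 + Matrix.single j i 1 := rfl

lemma conjLin_val (A : Matrix (Fin g) (Fin g) ℤ) (B : symMod ℤ g) :
    (conjLin A B : Matrix (Fin g) (Fin g) ℤ) = A * (B : Matrix (Fin g) (Fin g) ℤ) * Aᵀ := rfl

lemma conj_transvection_val (k l : Fin g) (B : Matrix (Fin g) (Fin g) ℤ) :
    Matrix.transvection k l 1 * B * (Matrix.transvection k l 1)ᵀ
      = B + Matrix.single k l 1 * B + B * Matrix.single l k 1
        + Matrix.single k l 1 * B * Matrix.single l k 1 := by
  rw [Matrix.transvection, Matrix.transpose_add, Matrix.transpose_one, transpose_std]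
  noncomm_ring

lemma conj_fix_D (k l j : Fin g) (hjl : j ≠ l) :
    conjLin (Matrix.transvection k l 1) (Dm j) = Dm j := by
  apply Subtype.ext
  rw [conjLin_val, conj_transvection_val]
  simp only [Dm_val, Sm_val, Submodule.coe_add]
  simp [hjl, hjl.symm]

lemma conj_move_Dl (k l : Fin g) :
    conjLin (Matrix.transvection k l 1) (Dm l) = Dm l + Sm k l + Dm k := by
  apply Subtype.ext
  rw [conjLin_val, conj_transvection_val]
  simp only [Dm_val, Sm_val, Submodule.coe_add]
  simp only [Matrix.single_mul_single_same, mul_one, one_mul]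
  abel

lemma conj_move_S (k l i : Fin g) (_hik : i ≠ k) (hil : i ≠ l) :
    conjLin (Matrix.transvection k l 1) (Sm l i) = Sm l i + Sm k i := by
  apply Subtype.ext
  rw [conjLin_val, conj_transvection_val]
  simp only [Dm_val, Sm_val, Submodule.coe_add]
  simp [Matrix.mul_add, Matrix.add_mul, hil, hil.symm]
  abel

lemma conj_fix_S (k l a b : Fin g) (hal : a ≠ l) (hbl : b ≠ l) :
    conjLin (Matrix.transvection k l 1) (Sm a b) = Sm a b := by
  apply Subtype.ext
  rw [conjLin_val, conj_transvection_val]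
  simp only [Dm_val, Sm_val, Submodule.coe_add]
  simp [Matrix.mul_add, Matrix.add_mul, hal, hal.symm, hbl, hbl.symm]

set_option maxHeartbeats 1000000
set_option synthInstance.maxHeartbeats 1000000

/-- The wedge of two symmetric matrices in the exterior algebra. -/
def w (B C : symMod ℤ g) : ExteriorAlgebra ℤ (symMod ℤ g) :=
  ExteriorAlgebra.ι ℤ B * ExteriorAlgebra.ι ℤ C

/-- The subgroup generated by the coinvariance relations. -/
def K (g : ℕ) : AddSubgroup (ExteriorAlgebra ℤ (symMod ℤ g)) :=
  AddSubgroup.closure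
    {y : ExteriorAlgebra ℤ (symMod ℤ g) |
      ∃ (σ : Matrix.SpecialLinearGroup (Fin g) ℤ) (z : ExteriorAlgebra ℤ (symMod ℤ g)),
        z ∈ ⋀[ℤ]^2 (symMod ℤ g) ∧
        y = ExteriorAlgebra.map (conjLin (σ : Matrix (Fin g) (Fin g) ℤ)) z - z}

lemma w_mem (B C : symMod ℤ g) : w B C ∈ ⋀[ℤ]^2 (symMod ℤ g) := by
  rw [show (⋀[ℤ]^2 (symMod ℤ g)) = LinearMap.range (ExteriorAlgebra.ι ℤ) ^ 2 from rfl, pow_two]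
  exact Submodule.mul_mem_mul (LinearMap.mem_range_self _ B) (LinearMap.mem_range_self _ C)

lemma w_add_right (X B C : symMod ℤ g) : w X (B + C) = w X B + w X C := by
  simp [w, mul_add]

lemma w_zero_right (X : symMod ℤ g) : w X 0 = 0 := by simp [w]

lemma w_zero_left (X : symMod ℤ g) : w 0 X = 0 := by simp [w]

lemma w_add_left (X B C : symMod ℤ g) : w (B + C) X = w B X + w C X := by
  simp [w, add_mul]

lemma w_smul_right (c : ℤ) (X B : symMod ℤ g) : w X (c • B) = c • w X B := by
  rw [w, w, _root_.map_smul, mul_smul_comm]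

lemma w_smul_left (c : ℤ) (X B : symMod ℤ g) : w (c • B) X = c • w B X := by
  rw [w, w, _root_.map_smul, smul_mul_assoc]

lemma w_self (X : symMod ℤ g) : w X X = 0 := ExteriorAlgebra.ι_sq_zero X

lemma w_antisymm (X Y : symMod ℤ g) : w X Y = - w Y X :=
  eq_neg_of_add_eq_zero_left (ExteriorAlgebra.ι_add_mul_swap X Y)

lemma base_rel (σ : Matrix.SpecialLinearGroup (Fin g) ℤ) (B C : symMod ℤ g) :
    w (conjLin (σ : Matrix (Fin g) (Fin g) ℤ) B) (conjLin (σ : Matrix (Fin g) (Fin g) ℤ) C)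
      - w B C ∈ K g := by
  apply AddSubgroup.subset_closure
  refine ⟨σ, w B C, w_mem B C, ?_⟩
  have hmap : ExteriorAlgebra.map (conjLin (σ : Matrix (Fin g) (Fin g) ℤ)) (w B C)
      = w (conjLin (σ : Matrix (Fin g) (Fin g) ℤ) B)
        (conjLin (σ : Matrix (Fin g) (Fin g) ℤ) C) := by
    rw [w, _root_.map_mul, ExteriorAlgebra.map_apply_ι, ExteriorAlgebra.map_apply_ι]
    rfl
  rw [hmap]

/-- The transvection as an element of `SL(g,ℤ)`. -/
def Tv (k l : Fin g) (hkl : k ≠ l) : Matrix.SpecialLinearGroup (Fin g) ℤ :=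
  ⟨Matrix.transvection k l 1, Matrix.det_transvection_of_ne k l hkl 1⟩

lemma rel1 (k l i : Fin g) (hkl : k ≠ l) (hik : i ≠ k) (hil : i ≠ l)
    (X : symMod ℤ g) (hX : conjLin (Matrix.transvection k l 1) X = X) :
    w X (Sm k i) ∈ K g := by
  have h := base_rel (Tv k l hkl) X (Sm l i)
  rw [show ((Tv k l hkl : Matrix.SpecialLinearGroup (Fin g) ℤ) : Matrix (Fin g) (Fin g) ℤ)
      = Matrix.transvection k l 1 from rfl, hX, conj_move_S k l i hik hil,
    w_add_right, add_sub_cancel_left] at h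
  exact h

lemma rel2 (k l : Fin g) (hkl : k ≠ l)
    (X : symMod ℤ g) (hX : conjLin (Matrix.transvection k l 1) X = X) :
    w X (Sm k l) + w X (Dm k) ∈ K g := by
  have h := base_rel (Tv k l hkl) X (Dm l)
  rw [show ((Tv k l hkl : Matrix.SpecialLinearGroup (Fin g) ℤ) : Matrix (Fin g) (Fin g) ℤ)
      = Matrix.transvection k l 1 from rfl, hX, conj_move_Dl k l,
    w_add_right, w_add_right, add_assoc, add_sub_cancel_left] at h
  exact h

lemma exists_fresh (hg : 4 ≤ g) (a b c : Fin g) : ∃ l : Fin g, l ≠ a ∧ l ≠ b ∧ l ≠ c := by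
  by_contra h
  push_neg at h
  have hsub : (Finset.univ : Finset (Fin g)) ⊆ {a, b, c} := by
    intro x _
    by_cases hxa : x = a
    · simp [hxa]
    · by_cases hxb : x = b
      · simp [hxb]
      · have := h x hxa hxb
        simp [this]
  have h1 : Fintype.card (Fin g) ≤ ({a, b, c} : Finset (Fin g)).card := by
    simpa using Finset.card_le_card hsub
  have h2 : ({a, b, c} : Finset (Fin g)).card ≤ 3 := by
    apply le_trans (Finset.card_insert_le _ _)
    apply Nat.succ_le_succ
    apply le_trans (Finset.card_insert_le _ _)
    simp
  simp only [Fintype.card_fin] at h1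
  omega

variable (hg : 4 ≤ g)
include hg

lemma L2 (j a b : Fin g) (hab : a ≠ b) : w (Dm j) (Sm a b) ∈ K g := by
  obtain ⟨l, hla, hlb, hlj⟩ := exists_fresh hg a b j
  exact rel1 a l b (Ne.symm hla) (Ne.symm hab) (Ne.symm hlb) (Dm j)
    (conj_fix_D a l j (Ne.symm hlj))

lemma L3 (j k : Fin g) : w (Dm j) (Dm k) ∈ K g := by
  by_cases hjk : j = k
  · rw [hjk, w_self]
    exact zero_mem _
  · obtain ⟨l, hlj, hlk, -⟩ := exists_fresh hg j k k
    have h2 := rel2 k l (Ne.symm hlk) (Dm j) (conj_fix_D k l j (Ne.symm hlj))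
    have hS : w (Dm j) (Sm k l) ∈ K g := L2 hg j k l (Ne.symm hlk)
    have := sub_mem h2 hS
    rwa [add_sub_cancel_left] at this
    
lemma L4 (a b k : Fin g) (hab : a ≠ b) : w (Sm a b) (Dm k) ∈ K g := by
  rw [w_antisymm]
  exact neg_mem (L2 hg k a b hab)

lemma L5a (a b k l : Fin g) (hab : a ≠ b) (hkl : k ≠ l) (hla : l ≠ a) (hlb : l ≠ b) :
    w (Sm a b) (Sm k l) ∈ K g := by
  have h2 := rel2 k l hkl (Sm a b) (conj_fix_S k l a b (Ne.symm hla) (Ne.symm hlb))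
  have hD : w (Sm a b) (Dm k) ∈ K g := L4 hg a b k hab
  have := sub_mem h2 hD
  rwa [add_sub_cancel_right] at this

lemma L5 (a b k l : Fin g) (hab : a ≠ b) (hkl : k ≠ l) : w (Sm a b) (Sm k l) ∈ K g := by
  by_cases hla : l = a
  · subst hla
    by_cases hkb : k = b
    · subst hkb
      rw [Sm_comm k l, w_self]
      exact zero_mem _
    · rw [Sm_comm k l]
      exact L5a hg l b l k hab (Ne.symm hkl) hkl hkb
  · by_cases hlb : l = b
    · subst hlb
      by_cases hka : k = a
      · subst hka
        rw [w_self]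
        exact zero_mem _
      · rw [Sm_comm k l]
        exact L5a hg a l l k hab (Ne.symm hkl) hka hkl
    · exact L5a hg a b k l hab hkl hla hlb

omit hg

/-- Generating set: the standard basis of the symmetric matrices. -/
def Gset (g : ℕ) : Set (symMod ℤ g) :=
  Set.range Dm ∪ {p | ∃ a b : Fin g, a ≠ b ∧ p = Sm a b}

lemma mem_span_G (X : symMod ℤ g) : X ∈ Submodule.span ℤ (Gset g) := by
  have hsym : ∀ p q, (X : Matrix (Fin g) (Fin g) ℤ) q p = (X : Matrix (Fin g) (Fin g) ℤ) p q :=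
    fun p q => X.2.apply p q
  have hrep : X = (∑ i : Fin g, (X : Matrix (Fin g) (Fin g) ℤ) i i • Dm i)
      + ∑ i : Fin g, ∑ j : Fin g,
          (if i < j then (X : Matrix (Fin g) (Fin g) ℤ) i j else 0) • Sm i j := by
    apply Subtype.ext
    apply Matrix.ext
    intro p q
    simp only [Submodule.coe_add, AddSubmonoidClass.coe_finset_sum, SetLike.val_smul,
      Matrix.add_apply, Matrix.sum_apply, Matrix.smul_apply, Dm_val, Sm_val, smul_eq_mul,
      Matrix.single, Matrix.of_apply]
    have key1 : (∑ i : Fin g, (X : Matrix (Fin g) (Fin g) ℤ) i i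
        * if i = p ∧ i = q then (1:ℤ) else 0)
        = if p = q then (X : Matrix (Fin g) (Fin g) ℤ) p p else 0 := by
      rcases eq_or_ne p q with rfl | hpq
      · simp
      · rw [if_neg hpq]
        apply Finset.sum_eq_zero
        intro i _
        rw [if_neg, mul_zero]
        rintro ⟨rfl, rfl⟩
        exact hpq rfl
    have hterm : ∀ i j : Fin g,
        (if i < j then (X : Matrix (Fin g) (Fin g) ℤ) i j else 0)
          * ((if i = p ∧ j = q then (1:ℤ) else 0) + (if j = p ∧ i = q then 1 else 0))
        = (if i = p ∧ j = q then
            (if p < q then (X : Matrix (Fin g) (Fin g) ℤ) p q else 0) else 0)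
          + (if i = q ∧ j = p then
            (if q < p then (X : Matrix (Fin g) (Fin g) ℤ) q p else 0) else 0) := by
      intro i j
      by_cases h1 : i = p ∧ j = q <;> by_cases h2 : j = p ∧ i = q
      · obtain ⟨rfl, rfl⟩ := h1
        obtain ⟨rfl, -⟩ := h2
        simp [lt_irrefl]
      · obtain ⟨rfl, rfl⟩ := h1
        have hij : i ≠ j := fun h => h2 ⟨h.symm, h⟩
        simp [hij, hij.symm]
      · obtain ⟨rfl, rfl⟩ := h2
        have hij : i ≠ j := fun h => h1 ⟨h, h.symm⟩
        simp [hij, hij.symm]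
      · have h3 : ¬(i = q ∧ j = p) := fun h => h2 ⟨h.2, h.1⟩
        simp [h1, h2, h3]
    have key2 : (∑ i : Fin g, ∑ j : Fin g,
        (if i < j then (X : Matrix (Fin g) (Fin g) ℤ) i j else 0)
          * ((if i = p ∧ j = q then (1:ℤ) else 0) + (if j = p ∧ i = q then 1 else 0)))
        = (if p < q then (X : Matrix (Fin g) (Fin g) ℤ) p q else 0)
          + (if q < p then (X : Matrix (Fin g) (Fin g) ℤ) q p else 0) := by
      rw [Finset.sum_congr rfl fun i _ => Finset.sum_congr rfl fun j _ => hterm i j]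
      simp [Finset.sum_add_distrib, ite_and]
    rw [key1, key2]
    rcases lt_trichotomy p q with h | h | h
    · simp [h, h.ne, h.ne', not_lt_of_gt h, hsym]
    · simp [h, lt_irrefl]
    · simp [h, h.ne, h.ne', not_lt_of_gt h, hsym]
  rw [hrep]
  refine add_mem (Submodule.sum_mem _ fun i _ => Submodule.smul_mem _ _
    (Submodule.subset_span (Or.inl ⟨i, rfl⟩))) ?_
  refine Submodule.sum_mem _ fun i _ => Submodule.sum_mem _ fun j _ => ?_
  by_cases hij : i < j
  · exact Submodule.smul_mem _ _ (Submodule.subset_span (Or.inr ⟨i, j, ne_of_lt hij, rfl⟩))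
  · rw [if_neg hij, zero_smul]
    exact zero_mem _

lemma w_gen_mem (hg : 4 ≤ g) (B C : symMod ℤ g) (hB : B ∈ Gset g) (hC : C ∈ Gset g) :
    w B C ∈ K g := by
  rcases hB with ⟨i, rfl⟩ | ⟨a, b, hab, rfl⟩ <;> rcases hC with ⟨k, rfl⟩ | ⟨c, d, hcd, rfl⟩
  · exact L3 hg i k
  · exact L2 hg i c d hcd
  · exact L4 hg a b k hab
  · exact L5 hg a b c d hab hcd

lemma w_mem_K (hg : 4 ≤ g) (B C : symMod ℤ g) : w B C ∈ K g := by
  refine Submodule.span_induction₂ (p := fun x y _ _ => w x y ∈ K g) ?_ ?_ ?_ ?_ ?_ ?_ ?_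
    (mem_span_G B) (mem_span_G C)
  · exact fun x y hx hy => w_gen_mem hg x y hx hy
  · intro y _
    rw [w_zero_left]
    exact zero_mem _
  · intro x _
    rw [w_zero_right]
    exact zero_mem _
  · intro x y z _ _ _ h1 h2
    rw [w_add_left]
    exact add_mem h1 h2
  · intro x y z _ _ _ h1 h2
    rw [w_add_right]
    exact add_mem h1 h2
  · intro r x y _ _ h
    rw [w_smul_left]
    exact AddSubgroup.zsmul_mem _ h r
  · intro r x y _ _ h
    rw [w_smul_right]
    exact AddSubgroup.zsmul_mem _ h r

end Stmt7Aux

set_option maxHeartbeats 1000000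
set_option synthInstance.maxHeartbeats 1000000

/-- For `g ≥ 4`, the coinvariants of `Λ²(S²L)` under the diagonal `SL(g,ℤ)`-action are
trivial: every element of `Λ²(S²L)` lies in the subgroup generated by the elements
`σ·x - x`. Here `S²L` is modeled by symmetric `g×g` integer matrices with action
`B ↦ A B ᵗA`, and `Λ²` is the degree-2 part of the exterior algebra. -/
theorem stmt7 (g : ℕ) (hg : 4 ≤ g) :
    ∀ x : ExteriorAlgebra ℤ (symMod ℤ g), x ∈ ⋀[ℤ]^2 (symMod ℤ g) →
      x ∈ AddSubgroup.closure
        {y : ExteriorAlgebra ℤ (symMod ℤ g) |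
          ∃ (σ : Matrix.SpecialLinearGroup (Fin g) ℤ) (z : ExteriorAlgebra ℤ (symMod ℤ g)),
            z ∈ ⋀[ℤ]^2 (symMod ℤ g) ∧
            y = ExteriorAlgebra.map (conjLin (σ : Matrix (Fin g) (Fin g) ℤ)) z - z} := by
  intro x hx
  have hx2 : x ∈ LinearMap.range (ExteriorAlgebra.ι ℤ (M := symMod ℤ g))
      * LinearMap.range (ExteriorAlgebra.ι ℤ (M := symMod ℤ g)) := by
    rw [← pow_two]
    exact hx
  have hK : x ∈ Stmt7Aux.K g := by
    refine Submodule.mul_induction_on hx2 ?_ ?_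
    · rintro m ⟨B, rfl⟩ n ⟨C, rfl⟩
      exact Stmt7Aux.w_mem_K hg B C
    · intro a b ha hb
      exact add_mem ha hb
  exact hK
end

section
/- For g = 3, the coinvariants (Λ²(S²L))_{SL(3,ℤ)} form a group of order at most 2, generated by the class of X₁² ∧ X₂², and in this quotient one has the identities X₁² ∧ X₂₃ = X₃² ∧ X₁₂ = X₂² ∧ X₁₃ = X₁² ∧ X₂² = X₁² ∧ X₃² = X₂² ∧ X₃², and 2(X₁² ∧ X₂²) = 0. -/
open Matrix

variable (R : Type) [CommRing R]

variable {R}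

lemma isSymm_std {g : ℕ} (i : Fin g) :
    (Matrix.single i i (1 : ℤ)).IsSymm := by
  show (Matrix.single i i (1 : ℤ))ᵀ = _
  ext a b
  simp [Matrix.single, Matrix.transpose_apply, and_comm]

lemma isSymm_mix {g : ℕ} (i j : Fin g) :
    (Matrix.single i j (1 : ℤ) + Matrix.single j i (1 : ℤ)).IsSymm := by
  show _ᵀ = _
  ext a b
  simp [Matrix.single, Matrix.transpose_apply]
  rw [add_comm]
  congr 1 <;> simp [and_comm]

/-- `Xᵢ² = xᵢ⊗xᵢ` as an element of `S²L` (symmetric matrices). -/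
def Xsq {g : ℕ} (i : Fin g) : symMod ℤ g :=
  ⟨Matrix.single i i 1, isSymm_std i⟩

/-- `X_{ij} = xᵢ⊗xⱼ + xⱼ⊗xᵢ` as an element of `S²L`. -/
def Xmix {g : ℕ} (i j : Fin g) : symMod ℤ g :=
  ⟨Matrix.single i j 1 + Matrix.single j i 1, isSymm_mix i j⟩

/-- The wedge product `a ∧ b ∈ Λ²(S²L)`, inside the exterior algebra. -/
noncomputable def wedge {g : ℕ} (a b : symMod ℤ g) : ExteriorAlgebra ℤ (symMod ℤ g) :=
  ExteriorAlgebra.ι ℤ a * ExteriorAlgebra.ι ℤ b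

/-- The subgroup `Q₁` of `Λ²(S²L)` generated by the elements `σ·x - x`. -/
def Qone (g : ℕ) : AddSubgroup (ExteriorAlgebra ℤ (symMod ℤ g)) :=
  AddSubgroup.closure
    {y : ExteriorAlgebra ℤ (symMod ℤ g) |
      ∃ (σ : Matrix.SpecialLinearGroup (Fin g) ℤ) (z : ExteriorAlgebra ℤ (symMod ℤ g)),
        z ∈ ⋀[ℤ]^2 (symMod ℤ g) ∧
        y = ExteriorAlgebra.map (conjLin (σ : Matrix (Fin g) (Fin g) ℤ)) z - z}

set_option synthInstance.maxHeartbeats 1000000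
set_option maxHeartbeats 4000000

section Aux
open ExteriorAlgebra

abbrev EA := ExteriorAlgebra ℤ (symMod ℤ 3)

lemma wedge_add_left (a b c : symMod ℤ 3) :
    wedge (a + b) c = wedge a c + wedge b c := by
  simp [wedge, map_add, add_mul]

lemma wedge_add_right (a b c : symMod ℤ 3) :
    wedge a (b + c) = wedge a b + wedge a c := by
  simp [wedge, map_add, mul_add]

lemma wedge_smul_left (n : ℤ) (a b : symMod ℤ 3) :
    wedge (n • a) b = n • wedge a b := by
  rw [wedge, wedge, _root_.map_smul, smul_mul_assoc]

lemma wedge_smul_right (n : ℤ) (a b : symMod ℤ 3) :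
    wedge a (n • b) = n • wedge a b := by
  rw [wedge, wedge, _root_.map_smul, mul_smul_comm]

lemma wedge_self (a : symMod ℤ 3) : wedge a a = 0 :=
  ExteriorAlgebra.ι_sq_zero a

lemma wedge_swap (a b : symMod ℤ 3) : wedge a b = - wedge b a := by
  have h := ExteriorAlgebra.ι_sq_zero (R := ℤ) (a + b)
  rw [map_add, add_mul, mul_add, mul_add, ι_sq_zero, ι_sq_zero] at h
  rw [eq_neg_iff_add_eq_zero]
  show wedge a b + wedge b a = 0
  rw [wedge, wedge]
  rw [zero_add, add_zero] at h
  exact h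

end Aux
section Aux2
open ExteriorAlgebra Matrix

abbrev A' : symMod ℤ 3 := Xsq 0
abbrev B' : symMod ℤ 3 := Xsq 1
abbrev C' : symMod ℤ 3 := Xsq 2
abbrev P' : symMod ℤ 3 := Xmix 0 1
abbrev Q' : symMod ℤ 3 := Xmix 0 2
abbrev R' : symMod ℤ 3 := Xmix 1 2

def σt : Matrix.SpecialLinearGroup (Fin 3) ℤ := ⟨!![1,1,0; 0,1,0; 0,0,1], by decide⟩
def σs : Matrix.SpecialLinearGroup (Fin 3) ℤ := ⟨!![1,0,0; 1,1,0; 0,0,1], by decide⟩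
def σu : Matrix.SpecialLinearGroup (Fin 3) ℤ := ⟨!![1,0,1; 0,1,0; 0,0,1], by decide⟩
def σc : Matrix.SpecialLinearGroup (Fin 3) ℤ := ⟨!![0,0,1; 1,0,0; 0,1,0], by decide⟩

-- images under σc
lemma cA : conjLin (σc : Matrix (Fin 3) (Fin 3) ℤ) A' = B' := by apply Subtype.ext; decide +kernel
lemma cB : conjLin (σc : Matrix (Fin 3) (Fin 3) ℤ) B' = C' := by apply Subtype.ext; decide +kernel
lemma cC : conjLin (σc : Matrix (Fin 3) (Fin 3) ℤ) C' = A' := by apply Subtype.ext; decide +kernel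
lemma cP : conjLin (σc : Matrix (Fin 3) (Fin 3) ℤ) P' = R' := by apply Subtype.ext; decide +kernel
lemma cQ : conjLin (σc : Matrix (Fin 3) (Fin 3) ℤ) Q' = P' := by apply Subtype.ext; decide +kernel
lemma cR : conjLin (σc : Matrix (Fin 3) (Fin 3) ℤ) R' = Q' := by apply Subtype.ext; decide +kernel

-- images under σt
lemma tA : conjLin (σt : Matrix (Fin 3) (Fin 3) ℤ) A' = A' := by apply Subtype.ext; decide +kernel
lemma tB : conjLin (σt : Matrix (Fin 3) (Fin 3) ℤ) B' = A' + B' + P' := by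
  apply Subtype.ext; decide +kernel
lemma tP : conjLin (σt : Matrix (Fin 3) (Fin 3) ℤ) P' = (2:ℤ) • A' + P' := by
  apply Subtype.ext; decide +kernel
lemma tQ : conjLin (σt : Matrix (Fin 3) (Fin 3) ℤ) Q' = Q' := by apply Subtype.ext; decide +kernel

-- images under σs
lemma sA : conjLin (σs : Matrix (Fin 3) (Fin 3) ℤ) A' = A' + B' + P' := by
  apply Subtype.ext; decide +kernel
lemma sB : conjLin (σs : Matrix (Fin 3) (Fin 3) ℤ) B' = B' := by apply Subtype.ext; decide +kernel

-- images under σu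
lemma uB : conjLin (σu : Matrix (Fin 3) (Fin 3) ℤ) B' = B' := by apply Subtype.ext; decide +kernel
lemma uC : conjLin (σu : Matrix (Fin 3) (Fin 3) ℤ) C' = A' + C' + Q' := by
  apply Subtype.ext; decide +kernel

lemma map_wedge (f : symMod ℤ 3 →ₗ[ℤ] symMod ℤ 3) (a b : symMod ℤ 3) :
    ExteriorAlgebra.map f (wedge a b) = wedge (f a) (f b) := by
  rw [wedge, wedge, _root_.map_mul, ExteriorAlgebra.map_apply_ι, ExteriorAlgebra.map_apply_ι]

lemma wedge_mem (a b : symMod ℤ 3) : wedge a b ∈ ⋀[ℤ]^2 (symMod ℤ 3) := by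
  rw [exteriorPower, pow_two]
  exact Submodule.mul_mem_mul (LinearMap.mem_range_self _ a) (LinearMap.mem_range_self _ b)

lemma Qgen (σ : Matrix.SpecialLinearGroup (Fin 3) ℤ) (a b : symMod ℤ 3) :
    wedge (conjLin (σ : Matrix (Fin 3) (Fin 3) ℤ) a)
      (conjLin (σ : Matrix (Fin 3) (Fin 3) ℤ) b) - wedge a b ∈ Qone 3 :=
  AddSubgroup.subset_closure ⟨σ, wedge a b, wedge_mem a b, by rw [map_wedge]⟩

end Aux2
section Aux3

lemma hAP : wedge A' P' ∈ Qone 3 := by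
  have h := Qgen σt A' B'
  rw [tA, tB] at h
  have heq : wedge A' (A' + B' + P') - wedge A' B' = wedge A' P' := by
    simp only [wedge_add_right, wedge_self]; abel
  rwa [heq] at h

lemma hPB : wedge P' B' ∈ Qone 3 := by
  have h := Qgen σs A' B'
  rw [sA, sB] at h
  have heq : wedge (A' + B' + P') B' - wedge A' B' = wedge P' B' := by
    simp only [wedge_add_left, wedge_self]; abel
  rwa [heq] at h

lemma hBP : wedge B' P' ∈ Qone 3 := by
  rw [wedge_swap]; exact neg_mem hPB

lemma hBR : wedge B' R' ∈ Qone 3 := by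
  have h := Qgen σc A' P'
  rw [cA, cP] at h
  simpa using add_mem h hAP

lemma hCQ : wedge C' Q' ∈ Qone 3 := by
  have h := Qgen σc B' R'
  rw [cB, cR] at h
  simpa using add_mem h hBR

lemma hCR : wedge C' R' ∈ Qone 3 := by
  have h := Qgen σc B' P'
  rw [cB, cP] at h
  simpa using add_mem h hBP

lemma hAQ : wedge A' Q' ∈ Qone 3 := by
  have h := Qgen σc C' R'
  rw [cC, cR] at h
  simpa using add_mem h hCR

lemma h2e : (2:ℤ) • wedge A' B' ∈ Qone 3 := by
  have h := Qgen σt P' B'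
  rw [tP, tB] at h
  have heq : wedge ((2:ℤ) • A' + P') (A' + B' + P') - wedge P' B'
      = (2:ℤ) • wedge A' B' + wedge A' P' := by
    simp only [wedge_add_left, wedge_add_right, wedge_smul_left, wedge_self]
    rw [wedge_swap P' A']
    abel
  rw [heq] at h
  simpa using sub_mem h hAP

lemma gBQ : wedge B' Q' - wedge A' B' ∈ Qone 3 := by
  have h := Qgen σu B' C'
  rw [uB, uC] at h
  have heq : wedge B' (A' + C' + Q') - wedge B' C' = wedge B' Q' - wedge A' B' := by
    simp only [wedge_add_right]
    rw [wedge_swap B' A']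
    abel
  rwa [heq] at h

lemma gCP : wedge C' P' - wedge B' Q' ∈ Qone 3 := by
  have h := Qgen σc B' Q'
  rwa [cB, cQ] at h

lemma gAR : wedge A' R' - wedge C' P' ∈ Qone 3 := by
  have h := Qgen σc A' R'
  rw [cA, cR] at h
  have h2 := neg_mem (add_mem gCP h)
  have heq : wedge A' R' - wedge C' P'
      = -((wedge C' P' - wedge B' Q') + (wedge B' Q' - wedge A' R')) := by abel
  rwa [heq]

lemma g6 : wedge B' C' - wedge A' B' ∈ Qone 3 := by
  have h := Qgen σc A' B'
  rwa [cA, cB] at h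

lemma g7 : wedge C' A' - wedge B' C' ∈ Qone 3 := by
  have h := Qgen σc B' C'
  rwa [cB, cC] at h

lemma gABAC : wedge A' B' - wedge A' C' ∈ Qone 3 := by
  have h := add_mem (add_mem g6 g7) h2e
  have heq : wedge A' B' - wedge A' C'
      = (wedge B' C' - wedge A' B') + (wedge C' A' - wedge B' C') + (2:ℤ) • wedge A' B' := by
    rw [wedge_swap C' A']; abel
  rwa [heq]

lemma gACBC : wedge A' C' - wedge B' C' ∈ Qone 3 := by
  have h := sub_mem (sub_mem (neg_mem g7) h2e) (AddSubgroup.zsmul_mem _ g6 2)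
  have heq : wedge A' C' - wedge B' C'
      = -(wedge C' A' - wedge B' C') - (2:ℤ) • wedge A' B'
        - (2:ℤ) • (wedge B' C' - wedge A' B') := by
    rw [wedge_swap C' A']
    rw [smul_sub]
    abel
  rwa [heq]

lemma hPQ : wedge P' Q' ∈ Qone 3 := by
  have h := Qgen σt B' Q'
  rw [tB, tQ] at h
  have heq : wedge (A' + B' + P') Q' - wedge B' Q' = wedge A' Q' + wedge P' Q' := by
    simp only [wedge_add_left]; abel
  rw [heq] at h
  have h2 := sub_mem h hAQ
  simpa using h2

lemma hRP : wedge R' P' ∈ Qone 3 := by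
  have h := Qgen σc P' Q'
  rw [cP, cQ] at h
  simpa using add_mem h hPQ

lemma hPR : wedge P' R' ∈ Qone 3 := by
  rw [wedge_swap]; exact neg_mem hRP

lemma hQR : wedge Q' R' ∈ Qone 3 := by
  have h := Qgen σc R' P'
  rw [cR, cP] at h
  simpa using add_mem h hRP

end Aux3
section Aux4
open ExteriorAlgebra

/-- The property of being congruent mod `Q₁` to a multiple of `X₁² ∧ X₂²`. -/
def Pp (x : ExteriorAlgebra ℤ (symMod ℤ 3)) : Prop :=
  ∃ n : ℤ, x - n • wedge (Xsq (0 : Fin 3)) (Xsq 1) ∈ Qone 3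

lemma Pp_of_mem {x} (h : x ∈ Qone 3) : Pp x :=
  ⟨0, by simpa using h⟩

lemma Pp_of_sub {x} (h : x - wedge A' B' ∈ Qone 3) : Pp x :=
  ⟨1, by simpa using h⟩

lemma Pp_zero : Pp 0 := Pp_of_mem (zero_mem _)

lemma Pp_add {x y} (hx : Pp x) (hy : Pp y) : Pp (x + y) := by
  obtain ⟨m, hm⟩ := hx
  obtain ⟨n, hn⟩ := hy
  refine ⟨m + n, ?_⟩
  have heq : (x + y) - (m + n) • wedge (Xsq (0:Fin 3)) (Xsq 1)
      = (x - m • wedge (Xsq (0:Fin 3)) (Xsq 1)) + (y - n • wedge (Xsq (0:Fin 3)) (Xsq 1)) := by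
    rw [add_smul]; abel
  rw [heq]
  exact add_mem hm hn

lemma Pp_smul (c : ℤ) {x} (hx : Pp x) : Pp (c • x) := by
  obtain ⟨m, hm⟩ := hx
  refine ⟨c * m, ?_⟩
  have heq : c • x - (c * m) • wedge (Xsq (0:Fin 3)) (Xsq 1)
      = c • (x - m • wedge (Xsq (0:Fin 3)) (Xsq 1)) := by
    rw [mul_smul, smul_sub]
  rw [heq]
  exact AddSubgroup.zsmul_mem _ hm c

lemma Pp_swap {a b : symMod ℤ 3} (h : Pp (wedge a b)) : Pp (wedge b a) := by
  rw [wedge_swap]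
  simpa using Pp_smul (-1) h

lemma eAB : Pp (wedge A' B') := Pp_of_sub (by simpa using zero_mem (Qone 3))

lemma eBC : Pp (wedge B' C') := Pp_of_sub g6

lemma eAC : Pp (wedge A' C') := by
  apply Pp_of_sub
  have h := add_mem gACBC g6
  have heq : wedge A' C' - wedge A' B'
      = (wedge A' C' - wedge B' C') + (wedge B' C' - wedge A' B') := by abel
  rwa [heq]

lemma eBQ : Pp (wedge B' Q') := Pp_of_sub gBQ

lemma eCP : Pp (wedge C' P') := by
  apply Pp_of_sub
  have h := add_mem gCP gBQ
  have heq : wedge C' P' - wedge A' B'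
      = (wedge C' P' - wedge B' Q') + (wedge B' Q' - wedge A' B') := by abel
  rwa [heq]

lemma eAR : Pp (wedge A' R') := by
  apply Pp_of_sub
  have h := add_mem gAR (add_mem gCP gBQ)
  have heq : wedge A' R' - wedge A' B'
      = (wedge A' R' - wedge C' P') + ((wedge C' P' - wedge B' Q')
        + (wedge B' Q' - wedge A' B')) := by abel
  rwa [heq]

lemma Pp_diag (a : symMod ℤ 3) : Pp (wedge a a) := by
  rw [wedge_self]; exact Pp_zero

/-- Decomposition of a symmetric 3×3 matrix in the standard basis. -/
lemma decomp (a : symMod ℤ 3) :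
    a = (a : Matrix (Fin 3) (Fin 3) ℤ) 0 0 • Xsq 0
      + (a : Matrix (Fin 3) (Fin 3) ℤ) 1 1 • Xsq 1
      + (a : Matrix (Fin 3) (Fin 3) ℤ) 2 2 • Xsq 2
      + (a : Matrix (Fin 3) (Fin 3) ℤ) 0 1 • Xmix 0 1
      + (a : Matrix (Fin 3) (Fin 3) ℤ) 0 2 • Xmix 0 2
      + (a : Matrix (Fin 3) (Fin 3) ℤ) 1 2 • Xmix 1 2 := by
  apply Subtype.ext
  have hs := a.2
  ext i j
  simp only [Submodule.coe_add, SetLike.val_smul, Matrix.add_apply, Matrix.smul_apply,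
    Xsq, Xmix, smul_eq_mul]
  fin_cases i <;> fin_cases j <;>
    simp [Matrix.single] <;>
    first
      | exact (a.2.apply _ _)
      | exact (a.2.apply _ _).symm

lemma Ppw_row_A (b : symMod ℤ 3) : Pp (wedge A' b) := by
  rw [decomp b]
  simp only [wedge_add_right, wedge_smul_right]
  exact Pp_add (Pp_add (Pp_add (Pp_add (Pp_add (Pp_smul _ (Pp_diag A')) (Pp_smul _ eAB))
    (Pp_smul _ eAC)) (Pp_smul _ (Pp_of_mem hAP))) (Pp_smul _ (Pp_of_mem hAQ))) (Pp_smul _ eAR)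

lemma Ppw_row_B (b : symMod ℤ 3) : Pp (wedge B' b) := by
  rw [decomp b]
  simp only [wedge_add_right, wedge_smul_right]
  exact Pp_add (Pp_add (Pp_add (Pp_add (Pp_add (Pp_smul _ (Pp_swap eAB))
    (Pp_smul _ (Pp_diag B'))) (Pp_smul _ eBC)) (Pp_smul _ (Pp_of_mem hBP)))
    (Pp_smul _ eBQ)) (Pp_smul _ (Pp_of_mem hBR))

lemma Ppw_row_C (b : symMod ℤ 3) : Pp (wedge C' b) := by
  rw [decomp b]
  simp only [wedge_add_right, wedge_smul_right]
  exact Pp_add (Pp_add (Pp_add (Pp_add (Pp_add (Pp_smul _ (Pp_swap eAC))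
    (Pp_smul _ (Pp_swap eBC))) (Pp_smul _ (Pp_diag C'))) (Pp_smul _ eCP))
    (Pp_smul _ (Pp_of_mem hCQ))) (Pp_smul _ (Pp_of_mem hCR))

lemma Ppw_row_P (b : symMod ℤ 3) : Pp (wedge P' b) := by
  rw [decomp b]
  simp only [wedge_add_right, wedge_smul_right]
  exact Pp_add (Pp_add (Pp_add (Pp_add (Pp_add (Pp_smul _ (Pp_swap (Pp_of_mem hAP)))
    (Pp_smul _ (Pp_of_mem hPB))) (Pp_smul _ (Pp_swap eCP))) (Pp_smul _ (Pp_diag P')))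
    (Pp_smul _ (Pp_of_mem hPQ))) (Pp_smul _ (Pp_of_mem hPR))

lemma Ppw_row_Q (b : symMod ℤ 3) : Pp (wedge Q' b) := by
  rw [decomp b]
  simp only [wedge_add_right, wedge_smul_right]
  exact Pp_add (Pp_add (Pp_add (Pp_add (Pp_add (Pp_smul _ (Pp_swap (Pp_of_mem hAQ)))
    (Pp_smul _ (Pp_swap eBQ))) (Pp_smul _ (Pp_swap (Pp_of_mem hCQ))))
    (Pp_smul _ (Pp_swap (Pp_of_mem hPQ)))) (Pp_smul _ (Pp_diag Q'))) (Pp_smul _ (Pp_of_mem hQR))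

lemma Ppw_row_R (b : symMod ℤ 3) : Pp (wedge R' b) := by
  rw [decomp b]
  simp only [wedge_add_right, wedge_smul_right]
  exact Pp_add (Pp_add (Pp_add (Pp_add (Pp_add (Pp_smul _ (Pp_swap eAR))
    (Pp_smul _ (Pp_swap (Pp_of_mem hBR)))) (Pp_smul _ (Pp_swap (Pp_of_mem hCR))))
    (Pp_smul _ (Pp_of_mem hRP))) (Pp_smul _ (Pp_swap (Pp_of_mem hQR)))) (Pp_smul _ (Pp_diag R'))

lemma Ppw (a b : symMod ℤ 3) : Pp (wedge a b) := by
  rw [decomp a]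
  simp only [wedge_add_left, wedge_smul_left]
  exact Pp_add (Pp_add (Pp_add (Pp_add (Pp_add (Pp_smul _ (Ppw_row_A b))
    (Pp_smul _ (Ppw_row_B b))) (Pp_smul _ (Ppw_row_C b))) (Pp_smul _ (Ppw_row_P b)))
    (Pp_smul _ (Ppw_row_Q b))) (Pp_smul _ (Ppw_row_R b))

lemma Pp_all {x : ExteriorAlgebra ℤ (symMod ℤ 3)} (hx : x ∈ ⋀[ℤ]^2 (symMod ℤ 3)) : Pp x := by
  rw [exteriorPower, pow_two] at hx
  refine Submodule.mul_induction_on hx ?_ ?_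
  · rintro m ⟨a, rfl⟩ n ⟨b, rfl⟩
    exact Ppw a b
  · intro x y hx hy
    exact Pp_add hx hy

end Aux4

/-- For `g = 3`, the coinvariants `(Λ²(S²L))_{SL(3,ℤ)}` form a group of order at most 2,
generated by the class of `X₁² ∧ X₂²`; in the quotient by `Q₁` one has
`X₁²∧X₂₃ = X₃²∧X₁₂ = X₂²∧X₁₃ = X₁²∧X₂² = X₁²∧X₃² = X₂²∧X₃²` and `2(X₁²∧X₂²) = 0`.
(Indices `0,1,2` stand for `1,2,3`.) -/
theorem stmt8 :
    wedge (Xsq (0 : Fin 3)) (Xmix 1 2) - wedge (Xsq 2) (Xmix 0 1) ∈ Qone 3 ∧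
    wedge (Xsq (2 : Fin 3)) (Xmix 0 1) - wedge (Xsq 1) (Xmix 0 2) ∈ Qone 3 ∧
    wedge (Xsq (1 : Fin 3)) (Xmix 0 2) - wedge (Xsq 0) (Xsq 1) ∈ Qone 3 ∧
    wedge (Xsq (0 : Fin 3)) (Xsq 1) - wedge (Xsq 0) (Xsq 2) ∈ Qone 3 ∧
    wedge (Xsq (0 : Fin 3)) (Xsq 2) - wedge (Xsq 1) (Xsq 2) ∈ Qone 3 ∧
    (2 : ℤ) • wedge (Xsq (0 : Fin 3)) (Xsq 1) ∈ Qone 3 ∧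
    (∀ x : ExteriorAlgebra ℤ (symMod ℤ 3), x ∈ ⋀[ℤ]^2 (symMod ℤ 3) →
      ∃ n : ℤ, x - n • wedge (Xsq (0 : Fin 3)) (Xsq 1) ∈ Qone 3) := by
  refine ⟨gAR, gCP, gBQ, gABAC, gACBC, h2e, ?_⟩
  intro x hx
  exact Pp_all hx
end

section
/- For g ≥ 3, the abelianization of urSp(2g) is isomorphic to ℤ/2ℤ, with the isomorphism induced by X ↦ det(ul(X)) where ul(X) is the upper-left g×g block. -/
open Matrix
open scoped commutatorElement

noncomputable def paperJ (g : ℕ) : Matrix (Fin g ⊕ Fin g) (Fin g ⊕ Fin g) ℤ :=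
  Matrix.fromBlocks 0 1 (-1) 0

lemma paperJ_eq (g : ℕ) : paperJ g = -(Matrix.J (Fin g) ℤ) := by
  simp [paperJ, Matrix.J, Matrix.fromBlocks_neg]

lemma paper_iff {g : ℕ} (X : Matrix (Fin g ⊕ Fin g) (Fin g ⊕ Fin g) ℤ) :
    Xᵀ * paperJ g * X = paperJ g ↔ X ∈ Matrix.symplecticGroup (Fin g) ℤ := by
  rw [SymplecticGroup.mem_iff', paperJ_eq, Matrix.mul_neg, Matrix.neg_mul, neg_inj]

lemma toBlocks₂₁_mul {g : ℕ} (M N : Matrix (Fin g ⊕ Fin g) (Fin g ⊕ Fin g) ℤ) :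
    (M * N).toBlocks₂₁ = M.toBlocks₂₁ * N.toBlocks₁₁ + M.toBlocks₂₂ * N.toBlocks₂₁ := by
  conv_lhs => rw [← Matrix.fromBlocks_toBlocks M, ← Matrix.fromBlocks_toBlocks N]
  rw [Matrix.fromBlocks_multiply]
  simp [Matrix.toBlocks_fromBlocks₂₁]

lemma toBlocks₁₁_mul {g : ℕ} (M N : Matrix (Fin g ⊕ Fin g) (Fin g ⊕ Fin g) ℤ) :
    (M * N).toBlocks₁₁ = M.toBlocks₁₁ * N.toBlocks₁₁ + M.toBlocks₁₂ * N.toBlocks₂₁ := by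
  conv_lhs => rw [← Matrix.fromBlocks_toBlocks M, ← Matrix.fromBlocks_toBlocks N]
  rw [Matrix.fromBlocks_multiply]
  simp [Matrix.toBlocks_fromBlocks₁₁]

lemma toBlocks₂₁_one {g : ℕ} :
    (1 : Matrix (Fin g ⊕ Fin g) (Fin g ⊕ Fin g) ℤ).toBlocks₂₁ = 0 := by
  rw [← Matrix.fromBlocks_one]
  exact Matrix.toBlocks_fromBlocks₂₁ _ _ _ _

lemma toBlocks₁₁_one {g : ℕ} :
    (1 : Matrix (Fin g ⊕ Fin g) (Fin g ⊕ Fin g) ℤ).toBlocks₁₁ = 1 := by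
  rw [← Matrix.fromBlocks_one]
  exact Matrix.toBlocks_fromBlocks₁₁ _ _ _ _

/-- The Lagrangian (homological handlebody) subgroup `urSp(2g)` of `Sp(2g,ℤ)`:
symplectic integer matrices whose lower left `g×g` block vanishes, as a subgroup
of `GL(2g,ℤ)`. -/
def urSpGroup (g : ℕ) : Subgroup (Matrix.GeneralLinearGroup (Fin g ⊕ Fin g) ℤ) where
  carrier := {X | (↑X : Matrix (Fin g ⊕ Fin g) (Fin g ⊕ Fin g) ℤ)ᵀ * paperJ g * ↑X = paperJ g ∧
    (↑X : Matrix (Fin g ⊕ Fin g) (Fin g ⊕ Fin g) ℤ).toBlocks₂₁ = 0}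
  one_mem' := by
    refine ⟨?_, ?_⟩
    · rw [Units.val_one, paper_iff]
      exact Submonoid.one_mem _
    · rw [Units.val_one]
      exact toBlocks₂₁_one
  mul_mem' := by
    rintro a b ⟨ha1, ha2⟩ ⟨hb1, hb2⟩
    rw [paper_iff] at ha1 hb1
    refine ⟨?_, ?_⟩
    · rw [Units.val_mul, paper_iff]
      exact Submonoid.mul_mem _ ha1 hb1
    · rw [Units.val_mul, toBlocks₂₁_mul, ha2, hb2]
      simp
  inv_mem' := by
    rintro a ⟨ha1, ha2⟩
    rw [paper_iff] at ha1
    have hcoe : ((↑(a⁻¹) : Matrix (Fin g ⊕ Fin g) (Fin g ⊕ Fin g) ℤ)) =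
        (↑a : Matrix (Fin g ⊕ Fin g) (Fin g ⊕ Fin g) ℤ)⁻¹ := by
      simp [Matrix.coe_units_inv]
    have hinv : (↑a : Matrix (Fin g ⊕ Fin g) (Fin g ⊕ Fin g) ℤ)⁻¹ =
        (-(Matrix.J (Fin g) ℤ)) * (↑a : Matrix _ _ ℤ)ᵀ * Matrix.J (Fin g) ℤ :=
      SymplecticGroup.inv_eq_symplectic_inv _ ha1
    have hmem : (↑a : Matrix (Fin g ⊕ Fin g) (Fin g ⊕ Fin g) ℤ)⁻¹ ∈
        Matrix.symplecticGroup (Fin g) ℤ := by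
      rw [hinv]
      exact Submonoid.mul_mem _
        (Submonoid.mul_mem _ (SymplecticGroup.neg_mem (SymplecticGroup.J_mem _ _))
          (SymplecticGroup.transpose_mem ha1)) (SymplecticGroup.J_mem _ _)
    constructor
    · rw [hcoe, paper_iff]
      exact hmem
    · rw [hcoe, hinv]
      have hXeq : (↑a : Matrix (Fin g ⊕ Fin g) (Fin g ⊕ Fin g) ℤ) =
          Matrix.fromBlocks (↑a : Matrix (Fin g ⊕ Fin g) (Fin g ⊕ Fin g) ℤ).toBlocks₁₁
            (↑a : Matrix (Fin g ⊕ Fin g) (Fin g ⊕ Fin g) ℤ).toBlocks₁₂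
            0 (↑a : Matrix (Fin g ⊕ Fin g) (Fin g ⊕ Fin g) ℤ).toBlocks₂₂ := by
        conv_lhs => rw [← Matrix.fromBlocks_toBlocks (↑a : Matrix (Fin g ⊕ Fin g) (Fin g ⊕ Fin g) ℤ)]
        rw [ha2]
      rw [hXeq]
      have hJ : (Matrix.J (Fin g) ℤ) = Matrix.fromBlocks 0 (-1) 1 0 := rfl
      have hnJ : (-(Matrix.J (Fin g) ℤ)) = Matrix.fromBlocks 0 1 (-1) 0 := by
        rw [hJ]
        simp [Matrix.fromBlocks_neg]
      rw [Matrix.fromBlocks_transpose, hnJ, hJ, Matrix.fromBlocks_multiply,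
        Matrix.fromBlocks_multiply]
      simp [Matrix.toBlocks_fromBlocks₂₁]

namespace urSpGroup

variable {g : ℕ}

/-- upper-left block of an element of `urSp(2g)`. -/
def ulBlock (X : urSpGroup g) : Matrix (Fin g) (Fin g) ℤ :=
  ((X : Matrix.GeneralLinearGroup (Fin g ⊕ Fin g) ℤ) :
    Matrix (Fin g ⊕ Fin g) (Fin g ⊕ Fin g) ℤ).toBlocks₁₁

lemma ulBlock_mul (X Y : urSpGroup g) : ulBlock (X * Y) = ulBlock X * ulBlock Y := by
  have hY : ((Y : Matrix.GeneralLinearGroup (Fin g ⊕ Fin g) ℤ) :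
      Matrix (Fin g ⊕ Fin g) (Fin g ⊕ Fin g) ℤ).toBlocks₂₁ = 0 := Y.2.2
  show ((((X * Y : urSpGroup g) : Matrix.GeneralLinearGroup (Fin g ⊕ Fin g) ℤ)) :
      Matrix (Fin g ⊕ Fin g) (Fin g ⊕ Fin g) ℤ).toBlocks₁₁ = _
  rw [Subgroup.coe_mul, Units.val_mul, toBlocks₁₁_mul, hY]
  simp [ulBlock]

lemma ulBlock_one : ulBlock (1 : urSpGroup g) = 1 := by
  show ((((1 : urSpGroup g) : Matrix.GeneralLinearGroup (Fin g ⊕ Fin g) ℤ)) :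
      Matrix (Fin g ⊕ Fin g) (Fin g ⊕ Fin g) ℤ).toBlocks₁₁ = 1
  rw [OneMemClass.coe_one, Units.val_one]
  exact toBlocks₁₁_one

lemma ulBlock_mul_inv (X : urSpGroup g) : ulBlock X * ulBlock X⁻¹ = 1 := by
  rw [← ulBlock_mul, mul_inv_cancel, ulBlock_one]

lemma ulBlock_inv_mul (X : urSpGroup g) : ulBlock X⁻¹ * ulBlock X = 1 := by
  rw [← ulBlock_mul, inv_mul_cancel, ulBlock_one]

/-- The homomorphism `det ∘ ul : urSp(2g) → {±1}`. -/
def detul (g : ℕ) : urSpGroup g →* ℤˣ where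
  toFun X :=
    { val := (ulBlock X).det
      inv := (ulBlock X⁻¹).det
      val_inv := by rw [← Matrix.det_mul, ulBlock_mul_inv, Matrix.det_one]
      inv_val := by rw [← Matrix.det_mul, ulBlock_inv_mul, Matrix.det_one] }
  map_one' := by
    ext
    show (ulBlock (1 : urSpGroup g)).det = 1
    rw [ulBlock_one, Matrix.det_one]
  map_mul' X Y := by
    ext
    show (ulBlock (X * Y)).det = (ulBlock X).det * (ulBlock Y).det
    rw [ulBlock_mul, Matrix.det_mul]

end urSpGroup



section Generation

variable {ι : Type*} [Fintype ι] [DecidableEq ι]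

/-- divisibility of all entries of a column gives divisibility of the determinant -/
lemma dvd_det_of_dvd_col (A : Matrix ι ι ℤ) (k : ι) (d : ℤ) (h : ∀ i, d ∣ A i k) :
    d ∣ A.det := by
  rw [Matrix.det_apply]
  refine Finset.dvd_sum fun σ _ => ?_
  rw [← Finset.prod_erase_mul _ _ (Finset.mem_univ k), Units.smul_def, smul_eq_mul]
  exact ((h (σ k)).mul_left _).mul_left _

/-- transvection as an element of GL -/
def tvGL (i j : ι) (hij : i ≠ j) (c : ℤ) : GL ι ℤ where
  val := transvection i j c
  inv := transvection i j (-c)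
  val_inv := by rw [transvection_mul_transvection_same _ _ hij, add_neg_cancel, transvection_zero]
  inv_val := by rw [transvection_mul_transvection_same _ _ hij, neg_add_cancel, transvection_zero]

/-- transvections with indices in s -/
def TvS (s : Finset ι) : Set (GL ι ℤ) :=
  {t | ∃ (i j : ι) (hij : i ≠ j) (c : ℤ), i ∈ s ∧ j ∈ s ∧ t = tvGL i j hij c}

lemma TvS_mono {s t : Finset ι} (h : s ⊆ t) : TvS s ⊆ TvS t := by
  rintro x ⟨i, j, hij, c, hi, hj, rfl⟩
  exact ⟨i, j, hij, c, h hi, h hj, rfl⟩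

/-- matrices which are identity outside s -/
def Fixout (s : Finset ι) (M : Matrix ι ι ℤ) : Prop :=
  (∀ i ∉ s, ∀ j, M i j = (1 : Matrix ι ι ℤ) i j) ∧
  (∀ j ∉ s, ∀ i, M i j = (1 : Matrix ι ι ℤ) i j)

lemma Fixout.mul {s : Finset ι} {M N : Matrix ι ι ℤ} (hM : Fixout s M) (hN : Fixout s N) :
    Fixout s (M * N) := by
  constructor
  · intro i hi j
    rw [Matrix.mul_apply]
    have : ∀ l, M i l * N l j = (if i = l then 1 else 0) * N l j := by
      intro l; rw [hM.1 i hi l, Matrix.one_apply]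
    rw [Finset.sum_congr rfl fun l _ => this l]
    simp [hN.1 i hi j]
  · intro j hj i
    rw [Matrix.mul_apply]
    have : ∀ l, M i l * N l j = M i l * (if l = j then 1 else 0) := by
      intro l; rw [hN.2 j hj l, Matrix.one_apply]
    rw [Finset.sum_congr rfl fun l _ => this l]
    simp [hM.2 j hj i]

lemma fixout_of_mem_closure {s : Finset ι} {L : GL ι ℤ}
    (h : L ∈ Subgroup.closure (TvS s)) : Fixout s (L : Matrix ι ι ℤ) := by
  induction h using Subgroup.closure_induction with
  | mem t ht =>
    obtain ⟨i, j, hij, c, hi, hj, rfl⟩ := ht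
    constructor
    · intro a ha b
      have hai : a ≠ i := fun h => ha (h ▸ hi)
      show transvection i j c a b = _
      rw [transvection]
      simp [Matrix.add_apply, Matrix.single_apply_of_row_ne (Ne.symm hai)]
    · intro b hb a
      have hbj : b ≠ j := fun h => hb (h ▸ hj)
      show transvection i j c a b = _
      rw [transvection]
      simp [Matrix.add_apply, Matrix.single_apply_of_col_ne _ _ (Ne.symm hbj)]
  | one => constructor <;> intro a _ b <;> rw [Units.val_one]
  | mul x y _ _ hx hy =>
    rw [Units.val_mul]; exact hx.mul hy
  | inv x _ hx =>
    constructor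
    · intro i hi j
      have h1 : ((x : Matrix ι ι ℤ) * ((x⁻¹ : GL ι ℤ) : Matrix ι ι ℤ)) i j
          = (1 : Matrix ι ι ℤ) i j := by
        rw [← Units.val_mul, mul_inv_cancel, Units.val_one]
      rw [Matrix.mul_apply] at h1
      have : ∀ l, (x : Matrix ι ι ℤ) i l * ((x⁻¹ : GL ι ℤ) : Matrix ι ι ℤ) l j
          = (if i = l then 1 else 0) * ((x⁻¹ : GL ι ℤ) : Matrix ι ι ℤ) l j := by
        intro l; rw [hx.1 i hi l, Matrix.one_apply]
      rw [Finset.sum_congr rfl fun l _ => this l] at h1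
      simpa using h1
    · intro j hj i
      have h1 : (((x⁻¹ : GL ι ℤ) : Matrix ι ι ℤ) * (x : Matrix ι ι ℤ)) i j
          = (1 : Matrix ι ι ℤ) i j := by
        rw [← Units.val_mul, inv_mul_cancel, Units.val_one]
      rw [Matrix.mul_apply] at h1
      have : ∀ l, ((x⁻¹ : GL ι ℤ) : Matrix ι ι ℤ) i l * (x : Matrix ι ι ℤ) l j
          = ((x⁻¹ : GL ι ℤ) : Matrix ι ι ℤ) i l * (if l = j then 1 else 0) := by
        intro l; rw [hx.2 j hj l, Matrix.one_apply]
      rw [Finset.sum_congr rfl fun l _ => this l] at h1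
      simpa using h1

lemma det_one_of_mem_closure {s : Finset ι} {L : GL ι ℤ}
    (h : L ∈ Subgroup.closure (TvS s)) : (L : Matrix ι ι ℤ).det = 1 := by
  induction h using Subgroup.closure_induction with
  | mem t ht =>
    obtain ⟨i, j, hij, c, _, _, rfl⟩ := ht
    exact det_transvection_of_ne i j hij c
  | one => rw [Units.val_one, det_one]
  | mul x y _ _ hx hy => rw [Units.val_mul, det_mul, hx, hy, one_mul]
  | inv x _ hx =>
    have : ((x⁻¹ : GL ι ℤ) : Matrix ι ι ℤ).det * (x : Matrix ι ι ℤ).det = 1 := by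
      rw [← det_mul, ← Units.val_mul, inv_mul_cancel, Units.val_one, det_one]
    rw [hx, mul_one] at this; exact this

end Generation

section Generation2

variable {ι : Type*} [Fintype ι] [DecidableEq ι]

lemma natAbs_emod_lt (a b : ℤ) (hb : b ≠ 0) : (a % b).natAbs < b.natAbs := by
  have h0 : 0 ≤ a % b := Int.emod_nonneg a hb
  rcases lt_or_gt_of_ne hb with h | h
  · have h1 : a % b < -b := by
      have := Int.emod_lt_of_pos a (show 0 < -b by omega)
      rwa [Int.emod_neg] at this
    omega
  · have h1 : a % b < b := Int.emod_lt_of_pos a h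
    omega

lemma col_reduce (s : Finset ι) (k : ι) (hk : k ∈ s) :
    ∀ N : ℕ, ∀ A : Matrix ι ι ℤ, (∑ i ∈ s, (A i k).natAbs) = N →
    A.det = 1 →
    (∀ i, i ∉ s → A i k = 0) →
    (∀ j, j ∉ s → ∀ i, A i j = (1 : Matrix ι ι ℤ) i j) →
    ∃ L : GL ι ℤ, L ∈ Subgroup.closure (TvS s) ∧
      ∀ i, ((L : Matrix ι ι ℤ) * A) i k = (1 : Matrix ι ι ℤ) i k := by
  intro N
  induction N using Nat.strong_induction_on with
  | _ N IH =>
  intro A hN hdet hcol hout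
  by_cases hpair : ∃ p, p ∈ s ∧ ∃ q, q ∈ s ∧ p ≠ q ∧ A q k ≠ 0 ∧
      (A q k).natAbs ≤ (A p k).natAbs ∧ A p k ≠ 0
  · obtain ⟨p, hp, q, hq, hpq, hAq, hle, hAp⟩ := hpair
    set c : ℤ := -(A p k / A q k) with hc
    have hcB : A p k + c * A q k = A p k % A q k := by rw [Int.emod_def, hc]; ring
    set B := transvection p q c * A with hBdef
    have hBrow : ∀ i j, i ≠ p → B i j = A i j := fun i j hi =>
      transvection_mul_apply_of_ne p q i j hi c A
    have hBp : ∀ j, B p j = A p j + c * A q j := fun j =>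
      transvection_mul_apply_same p q j c A
    have hlt : (B p k).natAbs < (A p k).natAbs := by
      rw [hBp k, hcB]
      calc (A p k % A q k).natAbs < (A q k).natAbs := natAbs_emod_lt _ _ hAq
        _ ≤ _ := hle
    have hsum : (∑ i ∈ s, (B i k).natAbs) < N := by
      rw [← hN, ← Finset.add_sum_erase _ _ hp, ← Finset.add_sum_erase _
        (fun i => (A i k).natAbs) hp]
      have heq : ∑ i ∈ s.erase p, (B i k).natAbs = ∑ i ∈ s.erase p, (A i k).natAbs :=
        Finset.sum_congr rfl fun i hi => by rw [hBrow i k (Finset.ne_of_mem_erase hi)]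
      omega
    have hBdet : B.det = 1 := by
      rw [hBdef, det_mul, det_transvection_of_ne _ _ hpq, one_mul, hdet]
    have hBcol : ∀ i, i ∉ s → B i k = 0 := fun i hi => by
      rw [hBrow i k (fun h => hi (h ▸ hp)), hcol i hi]
    have hBout : ∀ j, j ∉ s → ∀ i, B i j = (1 : Matrix ι ι ℤ) i j := by
      intro j hj i
      rcases eq_or_ne i p with rfl | hip
      · rw [hBp j, hout j hj i, hout j hj q]
        have hqj : q ≠ j := fun h => hj (h ▸ hq)
        rw [Matrix.one_apply_ne hqj, mul_zero, add_zero]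
      · rw [hBrow i j hip, hout j hj i]
    obtain ⟨L, hL, hLB⟩ := IH _ hsum B rfl hBdet hBcol hBout
    refine ⟨L * tvGL p q hpq c, Subgroup.mul_mem _ hL
      (Subgroup.subset_closure ⟨p, q, hpq, c, hp, hq, rfl⟩), ?_⟩
    intro i
    rw [Units.val_mul, Matrix.mul_assoc]
    exact hLB i
  · have huniq : ∀ p q, p ∈ s → q ∈ s → A p k ≠ 0 → A q k ≠ 0 → p = q := by
      intro p q hp hq hAp hAq
      by_contra hne
      rcases le_total ((A q k).natAbs) ((A p k).natAbs) with h | h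
      · exact hpair ⟨p, hp, q, hq, hne, hAq, h, hAp⟩
      · exact hpair ⟨q, hq, p, hp, Ne.symm hne, hAp, h, hAq⟩
    by_cases hm : ∃ m ∈ s, A m k ≠ 0
    · obtain ⟨m, hms, hAm⟩ := hm
      have hzero : ∀ i, i ≠ m → A i k = 0 := by
        intro i him
        by_cases his : i ∈ s
        · by_contra hne; exact him (huniq i m his hms hne hAm)
        · exact hcol i his
      have hdvd : A m k ∣ A.det := dvd_det_of_dvd_col A k (A m k) (fun i => by
        rcases eq_or_ne i m with rfl | h
        · exact dvd_rfl
        · rw [hzero i h]; exact dvd_zero _)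
      rw [hdet] at hdvd
      have hunit : A m k = 1 ∨ A m k = -1 := Int.isUnit_iff.mp (isUnit_of_dvd_one hdvd)
      rcases eq_or_ne m k with rfl | hmk
      · -- m = m
        rcases hunit with hone | hneg
        · refine ⟨1, Subgroup.one_mem _, ?_⟩
          intro i
          rw [Units.val_one, Matrix.one_mul, Matrix.one_apply]
          rcases eq_or_ne i m with rfl | h
          · rw [hone, if_pos rfl]
          · rw [hzero i h, if_neg h]
        · by_cases hj : ∃ j ∈ s, j ≠ m
          · obtain ⟨j, hjs, hjm⟩ := hj
            refine ⟨tvGL j m hjm (-1) * tvGL m j (Ne.symm hjm) 2 * tvGL j m hjm (-1),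
              Subgroup.mul_mem _ (Subgroup.mul_mem _
                (Subgroup.subset_closure ⟨j, m, hjm, -1, hjs, hms, rfl⟩)
                (Subgroup.subset_closure ⟨m, j, Ne.symm hjm, 2, hms, hjs, rfl⟩))
                (Subgroup.subset_closure ⟨j, m, hjm, -1, hjs, hms, rfl⟩), ?_⟩
            intro i
            rw [Units.val_mul, Units.val_mul, Matrix.mul_assoc, Matrix.mul_assoc]
            set B := transvection j m (-1) * A with hB
            have hBm : ∀ i', i' ≠ j → B i' m = A i' m := fun i' hi' =>
              transvection_mul_apply_of_ne j m i' m hi' (-1) A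
            have hBj : B j m = 1 := by
              rw [hB, transvection_mul_apply_same, hzero j hjm, hneg]; ring
            set C := transvection m j 2 * B with hC
            have hCm : ∀ i', i' ≠ m → C i' m = B i' m := fun i' hi' =>
              transvection_mul_apply_of_ne m j i' m hi' 2 B
            have hCk : C m m = 1 := by
              rw [hC, transvection_mul_apply_same, hBm m (Ne.symm hjm), hneg, hBj]; ring
            set D := transvection j m (-1) * C with hD
            have hDrow : ∀ i', i' ≠ j → D i' m = C i' m := fun i' hi' =>
              transvection_mul_apply_of_ne j m i' m hi' (-1) C
            have hDj : D j m = 0 := by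
              rw [hD, transvection_mul_apply_same, hCm j hjm, hBj, hCk]; ring
            show D i m = (1 : Matrix ι ι ℤ) i m
            rcases eq_or_ne i m with rfl | him
            · rw [hDrow i (Ne.symm hjm), hCk, Matrix.one_apply_eq]
            · rcases eq_or_ne i j with rfl | hij
              · rw [hDj, Matrix.one_apply_ne him]
              · rw [hDrow i hij, hCm i him, hBm i hij, hzero i him,
                  Matrix.one_apply_ne him]
          · push_neg at hj
            exfalso
            have hAeq : A = Matrix.diagonal (fun i => if i = m then (-1 : ℤ) else 1) := by
              ext i j
              rw [Matrix.diagonal_apply]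
              by_cases hjs : j ∈ s
              · have : j = m := hj j hjs
                subst this
                rcases eq_or_ne i j with rfl | h
                · rw [hneg, if_pos rfl, if_pos rfl]
                · rw [hzero i h, if_neg h]
              · rw [hout j hjs i, Matrix.one_apply]
                rcases eq_or_ne i j with rfl | h
                · have : i ≠ m := fun h' => hjs (h' ▸ hms)
                  rw [if_pos rfl, if_pos rfl, if_neg this]
                · rw [if_neg h, if_neg h]
            have hdetA : A.det = -1 := by
              rw [hAeq, det_diagonal, Finset.prod_eq_single m
                (fun b _ hb => if_neg hb) (fun h => absurd (Finset.mem_univ m) h)]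
              rw [if_pos rfl]
            rw [hdet] at hdetA
            exact absurd hdetA (by norm_num)
      · -- m ≠ k
        have hε2 : A m k * A m k = 1 := by rcases hunit with h | h <;> rw [h] <;> ring
        refine ⟨tvGL m k hmk (-(A m k)) * tvGL k m (Ne.symm hmk) (A m k),
          Subgroup.mul_mem _
            (Subgroup.subset_closure ⟨m, k, hmk, -(A m k), hms, hk, rfl⟩)
            (Subgroup.subset_closure ⟨k, m, Ne.symm hmk, A m k, hk, hms, rfl⟩), ?_⟩
        intro i
        rw [Units.val_mul, Matrix.mul_assoc]
        set B := transvection k m (A m k) * A with hB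
        have hBrow : ∀ i', i' ≠ k → B i' k = A i' k := fun i' hi' =>
          transvection_mul_apply_of_ne k m i' k hi' (A m k) A
        have hBk : B k k = 1 := by
          rw [hB, transvection_mul_apply_same, hzero k (Ne.symm hmk), hε2, zero_add]
        set C := transvection m k (-(A m k)) * B with hC
        have hCrow : ∀ i', i' ≠ m → C i' k = B i' k := fun i' hi' =>
          transvection_mul_apply_of_ne m k i' k hi' (-(A m k)) B
        have hCm : C m k = 0 := by
          rw [hC, transvection_mul_apply_same, hBrow m hmk, hBk]; ring
        show C i k = (1 : Matrix ι ι ℤ) i k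
        rcases eq_or_ne i k with rfl | hik
        · rw [hCrow i (Ne.symm hmk), hBk, Matrix.one_apply_eq]
        · rcases eq_or_ne i m with rfl | him
          · rw [hCm, Matrix.one_apply_ne hmk]
          · rw [hCrow i him, hBrow i hik, hzero i him, Matrix.one_apply_ne hik]
    · push_neg at hm
      exfalso
      have hz : ∀ i, A i k = 0 := by
        intro i
        by_cases his : i ∈ s
        · exact hm i his
        · exact hcol i his
      have h0 : A.det = 0 := Matrix.det_eq_zero_of_column_eq_zero k hz
      rw [hdet] at h0
      exact absurd h0 one_ne_zero

end Generation2

section Generation3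

variable {ι : Type*} [Fintype ι] [DecidableEq ι]

lemma row_id_mul (M N : Matrix ι ι ℤ) (i : ι) (h : ∀ l, M i l = (1 : Matrix ι ι ℤ) i l)
    (j : ι) : (M * N) i j = N i j := by
  rw [Matrix.mul_apply, Finset.sum_congr rfl (fun l _ => by rw [h l, Matrix.one_apply])]
  simp

lemma mul_col_id (M N : Matrix ι ι ℤ) (j : ι) (h : ∀ l, N l j = (1 : Matrix ι ι ℤ) l j)
    (i : ι) : (M * N) i j = M i j := by
  rw [Matrix.mul_apply, Finset.sum_congr rfl (fun l _ => by rw [h l, Matrix.one_apply])]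
  simp

lemma sq_sum_std_zero (k : ι) (t : Finset ι) (hkt : k ∉ t) (c : ι → ℤ) :
    (∑ j ∈ t, single k j (c j)) * (∑ j ∈ t, single k j (c j)) = 0 := by
  rw [Finset.sum_mul]
  refine Finset.sum_eq_zero fun j hj => ?_
  rw [Matrix.mul_sum]
  refine Finset.sum_eq_zero fun j' _ => ?_
  exact Matrix.single_mul_single_of_ne (c j) k j _ (show j ≠ k from fun hh => hkt (hh ▸ hj)) (c j')

/-- the unit `1 + ∑_{j ∈ t} c_j E_{kj}` (with `k ∉ t`) -/
def addU (k : ι) (t : Finset ι) (hkt : k ∉ t) (c : ι → ℤ) : GL ι ℤ where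
  val := 1 + ∑ j ∈ t, single k j (c j)
  inv := 1 - ∑ j ∈ t, single k j (c j)
  val_inv := by
    have h2 := sq_sum_std_zero k t hkt c
    rw [Matrix.add_mul, Matrix.one_mul, Matrix.mul_sub, Matrix.mul_one, h2, sub_zero,
      sub_add_cancel]
  inv_val := by
    have h2 := sq_sum_std_zero k t hkt c
    rw [Matrix.sub_mul, Matrix.one_mul, Matrix.mul_add, Matrix.mul_one, h2, add_zero,
      add_sub_cancel_right]

lemma addU_mem {s : Finset ι} (k : ι) (hks : k ∈ s) (c : ι → ℤ) :
    ∀ (t : Finset ι) (hkt : k ∉ t), t ⊆ s → addU k t hkt c ∈ Subgroup.closure (TvS s) := by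
  intro t
  induction t using Finset.induction with
  | empty =>
    intro hkt _
    have : addU k ∅ hkt c = 1 := Units.ext (by
      show (1 : Matrix ι ι ℤ) + ∑ j ∈ (∅ : Finset ι), single k j (c j) = 1
      simp)
    rw [this]; exact Subgroup.one_mem _
  | @insert a t' ha ih =>
    intro hkt hts
    have hak : a ≠ k := fun h => hkt (h ▸ Finset.mem_insert_self a t')
    have hkt' : k ∉ t' := fun h => hkt (Finset.mem_insert_of_mem h)
    have hsplit : addU k (insert a t') hkt c = tvGL k a (Ne.symm hak) (c a) * addU k t' hkt' c := by
      refine Units.ext ?_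
      show (1 : Matrix ι ι ℤ) + ∑ j ∈ insert a t', single k j (c j)
        = transvection k a (c a) * ((1 : Matrix ι ι ℤ) + ∑ j ∈ t', single k j (c j))
      rw [Finset.sum_insert ha, transvection, Matrix.add_mul, Matrix.one_mul, Matrix.mul_add,
        Matrix.mul_one, Matrix.mul_sum,
        Finset.sum_eq_zero (fun j _ => Matrix.single_mul_single_of_ne (c a) k a _ hak (c j))]
      abel
    rw [hsplit]
    exact Subgroup.mul_mem _
      (Subgroup.subset_closure ⟨k, a, Ne.symm hak, c a, hks, hts (Finset.mem_insert_self a t'), rfl⟩)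
      (ih hkt' (fun x hx => hts (Finset.mem_insert_of_mem hx)))

lemma mul_std_col (M : Matrix ι ι ℤ) (k : ι)
    (hcolk : ∀ i, M i k = (1 : Matrix ι ι ℤ) i k) (j : ι) (c : ℤ) :
    M * single k j c = single k j c := by
  ext a b
  rcases eq_or_ne b j with rfl | h
  · rw [Matrix.mul_single_apply_same, hcolk a, Matrix.one_apply]
    rcases eq_or_ne a k with rfl | hak
    · rw [if_pos rfl, one_mul, Matrix.single_apply_same]
    · rw [if_neg hak, zero_mul, Matrix.single_apply_of_row_ne (Ne.symm hak)]
  · rw [Matrix.mul_single_apply_of_ne c k j a b h,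
      Matrix.single_apply_of_col_ne _ _ (Ne.symm h)]

theorem mem_closure_TvS : ∀ (n : ℕ) (s : Finset ι), s.card = n → ∀ A : GL ι ℤ,
    (A : Matrix ι ι ℤ).det = 1 →
    (∀ i, i ∉ s → ∀ j, (A : Matrix ι ι ℤ) i j = (1 : Matrix ι ι ℤ) i j) →
    (∀ j, j ∉ s → ∀ i, (A : Matrix ι ι ℤ) i j = (1 : Matrix ι ι ℤ) i j) →
    A ∈ Subgroup.closure (TvS s) := by
  intro n
  induction n with
  | zero =>
    intro s hs A hdet hrow hcol
    have hA : A = 1 := Units.ext (by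
      ext i j
      rw [Units.val_one, hrow i (by simp [Finset.card_eq_zero.mp hs]) j])
    rw [hA]; exact Subgroup.one_mem _
  | succ n IH =>
    intro s hs A hdet hrow hcol
    obtain ⟨k, hk⟩ : s.Nonempty := Finset.card_pos.mp (by omega)
    obtain ⟨L, hL, hLcol⟩ := col_reduce s k hk _ (A : Matrix ι ι ℤ) rfl hdet
      (fun i hi => by
        rw [hrow i hi k, Matrix.one_apply_ne (fun h => hi (by rw [h]; exact hk))]) hcol
    have hfix := fixout_of_mem_closure hL
    set A₁ : GL ι ℤ := L * A with hA₁def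
    have hA₁v : (A₁ : Matrix ι ι ℤ) = (L : Matrix ι ι ℤ) * (A : Matrix ι ι ℤ) := rfl
    have hA₁det : (A₁ : Matrix ι ι ℤ).det = 1 := by
      rw [hA₁v, det_mul, det_one_of_mem_closure hL, hdet, one_mul]
    have hA₁col : ∀ i, (A₁ : Matrix ι ι ℤ) i k = (1 : Matrix ι ι ℤ) i k := fun i => hLcol i
    have hA₁row : ∀ i, i ∉ s → ∀ j, (A₁ : Matrix ι ι ℤ) i j = (1 : Matrix ι ι ℤ) i j := by
      intro i hi j
      rw [hA₁v, row_id_mul _ _ i (fun l => hfix.1 i hi l), hrow i hi j]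
    have hA₁colout : ∀ j, j ∉ s → ∀ i, (A₁ : Matrix ι ι ℤ) i j = (1 : Matrix ι ι ℤ) i j := by
      intro j hj i
      rw [hA₁v, mul_col_id _ _ j (fun l => hcol j hj l), hfix.2 j hj i]
    set cf : ι → ℤ := fun j => -((A₁ : Matrix ι ι ℤ) k j) with hcf
    have hkt : k ∉ s.erase k := Finset.notMem_erase k s
    set R : GL ι ℤ := addU k (s.erase k) hkt cf with hRdef
    have hRval : (R : Matrix ι ι ℤ) = 1 + ∑ j ∈ s.erase k, single k j (cf j) := rfl
    have hRmem : R ∈ Subgroup.closure (TvS s) :=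
      addU_mem k hk cf (s.erase k) hkt (Finset.erase_subset k s)
    set A₂ : GL ι ℤ := A₁ * R with hA₂def
    have hA₂val : (A₂ : Matrix ι ι ℤ)
        = (A₁ : Matrix ι ι ℤ) + ∑ j ∈ s.erase k, single k j (cf j) := by
      show (A₁ : Matrix ι ι ℤ) * (R : Matrix ι ι ℤ) = _
      rw [hRval, Matrix.mul_add, Matrix.mul_one, Matrix.mul_sum]
      congr 1
      exact Finset.sum_congr rfl fun j _ => mul_std_col _ k hA₁col j _
    have hSk : ∀ b, (∑ j ∈ s.erase k, single k j (cf j)) k b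
        = (if b ∈ s.erase k then cf b else 0) := by
      intro b
      rw [Matrix.sum_apply]
      by_cases hb : b ∈ s.erase k
      · rw [if_pos hb,
          Finset.sum_eq_single b (fun j _ hjb => Matrix.single_apply_of_col_ne _ _ hjb _)
            (fun h => absurd hb h), Matrix.single_apply_same]
      · rw [if_neg hb]
        exact Finset.sum_eq_zero fun j hj =>
          Matrix.single_apply_of_col_ne _ _ (show j ≠ b from fun hh => hb (hh ▸ hj)) _
    have hS : ∀ a b, (∑ j ∈ s.erase k, single k j (cf j)) a b
        = if a = k then (if b ∈ s.erase k then cf b else 0) else 0 := by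
      intro a b
      by_cases ha : a = k
      · rw [if_pos ha, ha, hSk b]
      · rw [if_neg ha, Matrix.sum_apply]
        exact Finset.sum_eq_zero fun j _ => Matrix.single_apply_of_row_ne (Ne.symm ha) _ _ _
    have hA₂entry : ∀ a b, (A₂ : Matrix ι ι ℤ) a b = (A₁ : Matrix ι ι ℤ) a b
        + (if a = k then (if b ∈ s.erase k then cf b else 0) else 0) := by
      intro a b
      rw [hA₂val, Matrix.add_apply, hS]
    have hA₂det : (A₂ : Matrix ι ι ℤ).det = 1 := by
      show ((A₁ : Matrix ι ι ℤ) * (R : Matrix ι ι ℤ)).det = 1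
      rw [det_mul, hA₁det, det_one_of_mem_closure hRmem, one_mul]
    have hA₂row : ∀ i, i ∉ s.erase k → ∀ j, (A₂ : Matrix ι ι ℤ) i j
        = (1 : Matrix ι ι ℤ) i j := by
      intro i hi j
      by_cases hik : i = k
      · rw [hA₂entry, if_pos hik]
        by_cases hj : j ∈ s.erase k
        · rw [if_pos hj]
          have h1 : ((A₁ : Matrix ι ι ℤ)) i j = ((A₁ : Matrix ι ι ℤ)) k j := by rw [hik]
          have h2 : (1 : Matrix ι ι ℤ) i j = 0 := Matrix.one_apply_ne
            (by rw [hik]; exact Ne.symm (Finset.ne_of_mem_erase hj))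
          rw [h1, h2]
          simp only [hcf]
          ring
        · rw [if_neg hj, add_zero]
          by_cases hji : j = k
          · rw [hji]; exact hA₁col i
          · have hjs : j ∉ s := fun hjs => hj (Finset.mem_erase.mpr ⟨hji, hjs⟩)
            rw [hA₁colout j hjs i]
      · have his : i ∉ s := fun his => hi (Finset.mem_erase.mpr ⟨hik, his⟩)
        rw [hA₂entry, if_neg hik, add_zero, hA₁row i his j]
    have hA₂col : ∀ j, j ∉ s.erase k → ∀ i, (A₂ : Matrix ι ι ℤ) i j
        = (1 : Matrix ι ι ℤ) i j := by
      intro j hj i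
      by_cases hjk : j = k
      · rw [hA₂entry]
        have h0 : (if i = k then (if j ∈ s.erase k then cf j else 0) else 0) = 0 := by
          by_cases hik : i = k
          · rw [if_pos hik, if_neg (by rw [hjk]; exact hkt)]
          · rw [if_neg hik]
        rw [h0, add_zero, hjk, hA₁col i]
      · have hjs : j ∉ s := fun hjs => hj (Finset.mem_erase.mpr ⟨hjk, hjs⟩)
        rw [hA₂entry, hA₁colout j hjs i]
        have h0 : (if i = k then (if j ∈ s.erase k then cf j else 0) else 0) = 0 := by
          by_cases hik : i = k
          · rw [if_pos hik, if_neg (fun hh => hjs (Finset.mem_of_mem_erase hh))]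
          · rw [if_neg hik]
        rw [h0, add_zero]
    have hcard : (s.erase k).card = n := by rw [Finset.card_erase_of_mem hk, hs]; omega
    have hA₂mem : A₂ ∈ Subgroup.closure (TvS s) :=
      Subgroup.closure_mono (TvS_mono (Finset.erase_subset k s))
        (IH (s.erase k) hcard A₂ hA₂det hA₂row hA₂col)
    have hAeq : A = L⁻¹ * A₂ * R⁻¹ := by
      rw [hA₂def, hA₁def]; group
    rw [hAeq]
    exact Subgroup.mul_mem _ (Subgroup.mul_mem _ (Subgroup.inv_mem _ hL) hA₂mem)
      (Subgroup.inv_mem _ hRmem)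

/-- Any integer matrix of determinant 1 is a product of transvections. -/
theorem mem_closure_TvS_univ (A : GL ι ℤ) (hdet : (A : Matrix ι ι ℤ).det = 1) :
    A ∈ Subgroup.closure (TvS (Finset.univ : Finset ι)) :=
  mem_closure_TvS _ Finset.univ rfl A hdet
    (fun i hi => absurd (Finset.mem_univ i) hi)
    (fun j hj => absurd (Finset.mem_univ j) hj)

end Generation3

section PartB

open urSpGroup

variable {g : ℕ}

abbrev Mg (g : ℕ) := Matrix (Fin g) (Fin g) ℤ

lemma urSp_ext {X Y : urSpGroup g}
    (h : ((X : Matrix.GeneralLinearGroup (Fin g ⊕ Fin g) ℤ) :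
            Matrix (Fin g ⊕ Fin g) (Fin g ⊕ Fin g) ℤ)
       = ((Y : Matrix.GeneralLinearGroup (Fin g ⊕ Fin g) ℤ) :
            Matrix (Fin g ⊕ Fin g) (Fin g ⊕ Fin g) ℤ)) : X = Y :=
  Subtype.ext (Units.ext h)

lemma paperJ_blocks (g : ℕ) : paperJ g = Matrix.fromBlocks 0 1 (-1) 0 := rfl

/-- diagonal embedding `A ↦ (A, 0; 0, A⁻ᵀ)` as a unit -/
def dUnit (A : GL (Fin g) ℤ) : Matrix.GeneralLinearGroup (Fin g ⊕ Fin g) ℤ where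
  val := Matrix.fromBlocks (A : Mg g) 0 0 ((↑A⁻¹ : Mg g))ᵀ
  inv := Matrix.fromBlocks (↑A⁻¹ : Mg g) 0 0 ((A : Mg g))ᵀ
  val_inv := by
    rw [Matrix.fromBlocks_multiply]
    have h1 : (A : Mg g) * (↑A⁻¹ : Mg g) = 1 := A.mul_inv
    have h2 : ((↑A⁻¹ : Mg g))ᵀ * ((A : Mg g))ᵀ = 1 := by
      rw [← Matrix.transpose_mul, A.mul_inv, Matrix.transpose_one]
    rw [h1, h2]
    simp [Matrix.fromBlocks_one]
  inv_val := by
    rw [Matrix.fromBlocks_multiply]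
    have h1 : (↑A⁻¹ : Mg g) * (A : Mg g) = 1 := A.inv_mul
    have h2 : ((A : Mg g))ᵀ * ((↑A⁻¹ : Mg g))ᵀ = 1 := by
      rw [← Matrix.transpose_mul, A.inv_mul, Matrix.transpose_one]
    rw [h1, h2]
    simp [Matrix.fromBlocks_one]

lemma dUnit_mem (A : GL (Fin g) ℤ) : dUnit A ∈ urSpGroup g := by
  refine ⟨?_, ?_⟩
  · show (Matrix.fromBlocks (A : Mg g) 0 0 ((↑A⁻¹ : Mg g))ᵀ)ᵀ * paperJ g *
      Matrix.fromBlocks (A : Mg g) 0 0 ((↑A⁻¹ : Mg g))ᵀ = paperJ g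
    rw [paperJ_blocks, Matrix.fromBlocks_transpose, Matrix.fromBlocks_multiply,
      Matrix.fromBlocks_multiply]
    have h2 : ((A : Mg g))ᵀ * ((↑A⁻¹ : Mg g))ᵀ = 1 := by
      rw [← Matrix.transpose_mul, A.inv_mul, Matrix.transpose_one]
    have h3 : (↑A⁻¹ : Mg g) * (A : Mg g) = 1 := A.inv_mul
    simp [-Matrix.coe_units_inv, h2, h3]
  · exact Matrix.toBlocks_fromBlocks₂₁ _ _ _ _

/-- The diagonal embedding `GL(g,ℤ) → urSp(2g)`. -/
def dGL : GL (Fin g) ℤ →* urSpGroup g where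
  toFun A := ⟨dUnit A, dUnit_mem A⟩
  map_one' := by
    apply urSp_ext
    show Matrix.fromBlocks ((1 : GL (Fin g) ℤ) : Mg g) 0 0 ((↑(1 : GL (Fin g) ℤ)⁻¹ : Mg g))ᵀ
      = ((1 : Matrix.GeneralLinearGroup (Fin g ⊕ Fin g) ℤ) : Matrix _ _ ℤ)
    simp [Matrix.fromBlocks_one]
  map_mul' A B := by
    apply urSp_ext
    show Matrix.fromBlocks ((A * B : GL (Fin g) ℤ) : Mg g) 0 0 ((↑(A * B)⁻¹ : Mg g))ᵀ
      = Matrix.fromBlocks (A : Mg g) 0 0 ((↑A⁻¹ : Mg g))ᵀ *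
        Matrix.fromBlocks (B : Mg g) 0 0 ((↑B⁻¹ : Mg g))ᵀ
    rw [Matrix.fromBlocks_multiply, _root_.mul_inv_rev, Units.val_mul, Units.val_mul,
      Matrix.transpose_mul]
    simp [-Matrix.coe_units_inv]

lemma dGL_val (A : GL (Fin g) ℤ) :
    ((dGL A : Matrix.GeneralLinearGroup (Fin g ⊕ Fin g) ℤ) : Matrix _ _ ℤ)
      = Matrix.fromBlocks (A : Mg g) 0 0 ((↑A⁻¹ : Mg g))ᵀ := rfl

/-- unipotent element `(1, S; 0, 1)` for symmetric `S` -/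
def uElt (S : Mg g) (hS : Sᵀ = S) : urSpGroup g :=
  ⟨{ val := Matrix.fromBlocks (1 : Mg g) S 0 (1 : Mg g)
     inv := Matrix.fromBlocks (1 : Mg g) (-S) 0 (1 : Mg g)
     val_inv := by rw [Matrix.fromBlocks_multiply]; simp [Matrix.fromBlocks_one]
     inv_val := by rw [Matrix.fromBlocks_multiply]; simp [Matrix.fromBlocks_one] },
   by
    refine ⟨?_, ?_⟩
    · show (Matrix.fromBlocks (1 : Mg g) S 0 (1 : Mg g))ᵀ * paperJ g * Matrix.fromBlocks (1 : Mg g) S 0 (1 : Mg g) = paperJ g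
      rw [paperJ_blocks, Matrix.fromBlocks_transpose, Matrix.fromBlocks_multiply,
        Matrix.fromBlocks_multiply]
      simp [hS]
    · exact Matrix.toBlocks_fromBlocks₂₁ _ _ _ _⟩

lemma uElt_val (S : Mg g) (hS : Sᵀ = S) :
    ((uElt S hS : Matrix.GeneralLinearGroup (Fin g ⊕ Fin g) ℤ) : Matrix _ _ ℤ)
      = Matrix.fromBlocks (1 : Mg g) S 0 (1 : Mg g) := rfl

lemma uElt_congr {S T : Mg g} {hS : Sᵀ = S} {hT : Tᵀ = T} (h : S = T) :
    uElt S hS = uElt T hT := by subst h; rfl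

lemma uElt_mul (S T : Mg g) (hS : Sᵀ = S) (hT : Tᵀ = T) :
    uElt S hS * uElt T hT = uElt (S + T) (by rw [Matrix.transpose_add, hS, hT]) := by
  apply urSp_ext
  show Matrix.fromBlocks (1 : Mg g) S 0 (1 : Mg g) * Matrix.fromBlocks (1 : Mg g) T 0 (1 : Mg g) = Matrix.fromBlocks (1 : Mg g) (S + T) 0 (1 : Mg g)
  rw [Matrix.fromBlocks_multiply]
  simp [add_comm]

lemma uElt_zero : uElt (0 : Mg g) Matrix.transpose_zero = 1 := by
  apply urSp_ext
  show Matrix.fromBlocks (1 : Mg g) (0 : Mg g) 0 (1 : Mg g) = ((1 : Matrix.GeneralLinearGroup (Fin g ⊕ Fin g) ℤ) : Matrix (Fin g ⊕ Fin g) (Fin g ⊕ Fin g) ℤ)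
  simp [Matrix.fromBlocks_one]

lemma uElt_inv (S : Mg g) (hS : Sᵀ = S) :
    (uElt S hS)⁻¹ = uElt (-S) (by rw [Matrix.transpose_neg, hS]) := by
  apply inv_eq_of_mul_eq_one_right
  rw [uElt_mul]
  exact (uElt_congr (add_neg_cancel S)).trans uElt_zero

lemma dGL_conj (A : GL (Fin g) ℤ) (S : Mg g) (hS : Sᵀ = S) :
    dGL A * uElt S hS * (dGL A)⁻¹
      = uElt ((A : Mg g) * S * ((A : Mg g))ᵀ)
          (by rw [Matrix.transpose_mul, Matrix.transpose_mul, Matrix.transpose_transpose,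
                hS, Matrix.mul_assoc]) := by
  rw [← map_inv]
  apply urSp_ext
  show (Matrix.fromBlocks (A : Mg g) 0 0 ((↑A⁻¹ : Mg g))ᵀ * Matrix.fromBlocks (1 : Mg g) S 0 (1 : Mg g)) *
      Matrix.fromBlocks (↑A⁻¹ : Mg g) 0 0 ((↑(A⁻¹)⁻¹ : Mg g))ᵀ
    = Matrix.fromBlocks (1 : Mg g) ((A : Mg g) * S * ((A : Mg g))ᵀ) 0 (1 : Mg g)
  rw [inv_inv, Matrix.fromBlocks_multiply, Matrix.fromBlocks_multiply]
  have h1 : (A : Mg g) * (↑A⁻¹ : Mg g) = 1 := A.mul_inv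
  have h2 : ((↑A⁻¹ : Mg g))ᵀ * ((A : Mg g))ᵀ = 1 := by
    rw [← Matrix.transpose_mul, A.mul_inv, Matrix.transpose_one]
  simp [-Matrix.coe_units_inv, h1, h2, Matrix.mul_assoc]

lemma comm_dGL_uElt (A : GL (Fin g) ℤ) (S : Mg g) (hS : Sᵀ = S) :
    ⁅dGL A, uElt S hS⁆
      = uElt ((A : Mg g) * S * ((A : Mg g))ᵀ - S)
          (by rw [Matrix.transpose_sub, Matrix.transpose_mul, Matrix.transpose_mul,
                Matrix.transpose_transpose, hS, Matrix.mul_assoc]) := by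
  rw [commutatorElement_def, dGL_conj A S hS, uElt_inv S hS, uElt_mul]
  exact uElt_congr (by rw [sub_eq_add_neg])

lemma uElt_sub_mem (A : GL (Fin g) ℤ) (S : Mg g) (hS : Sᵀ = S) (h' : _) :
    uElt ((A : Mg g) * S * ((A : Mg g))ᵀ - S) h' ∈ commutator (urSpGroup g) := by
  have := comm_dGL_uElt A S hS
  rw [commutator_def]
  rw [show uElt ((A : Mg g) * S * ((A : Mg g))ᵀ - S) h' = ⁅dGL A, uElt S hS⁆ from
    ((uElt_congr rfl).trans this.symm)]
  exact Subgroup.commutator_mem_commutator (Subgroup.mem_top _) (Subgroup.mem_top _)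

/-- the additive subgroup of symmetric matrices whose unipotent lies in the commutator subgroup -/
def WSub (g : ℕ) : AddSubgroup (Mg g) where
  carrier := {S | ∃ h : Sᵀ = S, uElt S h ∈ commutator (urSpGroup g)}
  zero_mem' := ⟨Matrix.transpose_zero, by rw [uElt_zero]; exact Subgroup.one_mem _⟩
  add_mem' := by
    rintro S T ⟨hS, hSC⟩ ⟨hT, hTC⟩
    refine ⟨by rw [Matrix.transpose_add, hS, hT], ?_⟩
    rw [show uElt (S + T) _ = uElt S hS * uElt T hT from (uElt_mul S T hS hT).symm.trans rfl]
    exact Subgroup.mul_mem _ hSC hTC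
  neg_mem' := by
    rintro S ⟨hS, hSC⟩
    refine ⟨by rw [Matrix.transpose_neg, hS], ?_⟩
    rw [show uElt (-S) _ = (uElt S hS)⁻¹ from ((uElt_inv S hS).symm.trans rfl)]
    exact Subgroup.inv_mem _ hSC

end PartB

section PartC

open urSpGroup

variable {g : ℕ}

lemma std_transpose (i j : Fin g) (c : ℤ) :
    (single i j c : Mg g)ᵀ = single j i c := by
  ext a b
  simp only [Matrix.transpose_apply, Matrix.single, Matrix.of_apply]
  exact if_congr and_comm rfl rfl

lemma exists_third (hg : 3 ≤ g) (i j : Fin g) : ∃ k : Fin g, k ≠ i ∧ k ≠ j := by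
  have hcard : ({i, j} : Finset (Fin g)).card < Fintype.card (Fin g) := by
    have h1 : ({i, j} : Finset (Fin g)).card ≤ 2 := by
      refine le_trans (Finset.card_insert_le i {j}) ?_
      rw [Finset.card_singleton]
    rw [Fintype.card_fin]
    omega
  have hne : ({i, j} : Finset (Fin g)) ≠ Finset.univ := by
    intro h
    rw [h, Finset.card_univ] at hcard
    omega
  obtain ⟨k, -, hk⟩ := Finset.exists_of_ssubset (Finset.ssubset_univ_iff.mpr hne)
  rw [Finset.mem_insert, Finset.mem_singleton] at hk
  push_neg at hk
  exact ⟨k, hk.1, hk.2⟩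

lemma trans_exp (a b a' b' : Fin g) (u v : ℤ) :
    (transvection a b u * transvection a' b' v : Mg g)
      = 1 + single a' b' v + single a b u
        + single a b u * single a' b' v := by
  rw [transvection, transvection, Matrix.add_mul, Matrix.one_mul, Matrix.mul_add, Matrix.mul_one]
  abel

lemma offdiag_mem (hg : 3 ≤ g) (i j : Fin g) (_hij : i ≠ j) (c : ℤ) :
    (single i j c + single j i c : Mg g) ∈ WSub g := by
  obtain ⟨k, hki, hkj⟩ := exists_third hg i j
  have hik : i ≠ k := Ne.symm hki
  set B : Mg g := single k j 1 + single j k 1 with hB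
  have hBsym : Bᵀ = B := by
    rw [hB, Matrix.transpose_add, std_transpose, std_transpose, add_comm]
  set A : GL (Fin g) ℤ := tvGL i k hik c with hA
  have hval : (A : Mg g) = 1 + single i k c := rfl
  have hvalT : ((A : Mg g))ᵀ = 1 + single k i c := by
    rw [hval, Matrix.transpose_add, Matrix.transpose_one, std_transpose]
  have hkey : (A : Mg g) * B * ((A : Mg g))ᵀ - B
      = single i j c + single j i c := by
    rw [hvalT, hval, hB]
    rw [Matrix.add_mul, Matrix.one_mul, Matrix.mul_add (single i k c),
      Matrix.single_mul_single_same, Matrix.single_mul_single_of_ne c i k _ hkj 1]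
    rw [Matrix.mul_add, Matrix.mul_one]
    rw [Matrix.add_mul, Matrix.add_mul, Matrix.add_mul,
      Matrix.single_mul_single_of_ne 1 k j _ (Ne.symm hkj) c,
      Matrix.single_mul_single_same,
      Matrix.single_mul_single_of_ne (c * 1) i j _ (Ne.symm hkj) c]
    rw [mul_one, one_mul, Matrix.zero_mul]
    abel
  refine ⟨by rw [Matrix.transpose_add, std_transpose, std_transpose, add_comm], ?_⟩
  rw [show (uElt (single i j c + single j i c) _ : urSpGroup g)
      = uElt ((A : Mg g) * B * ((A : Mg g))ᵀ - B)
          (by rw [Matrix.transpose_sub, Matrix.transpose_mul, Matrix.transpose_mul,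
                Matrix.transpose_transpose, hBsym, Matrix.mul_assoc]) from uElt_congr hkey.symm]
  exact uElt_sub_mem A B hBsym _

lemma diag_mem (hg : 3 ≤ g) (i : Fin g) (c : ℤ) :
    (single i i c : Mg g) ∈ WSub g := by
  obtain ⟨j, hji, -⟩ := exists_third hg i i
  have hij : i ≠ j := Ne.symm hji
  set B : Mg g := single j j c with hB
  have hBsym : Bᵀ = B := by rw [hB, std_transpose]
  set A : GL (Fin g) ℤ := tvGL i j hij 1 with hA
  have hval : (A : Mg g) = 1 + single i j 1 := rfl
  have hvalT : ((A : Mg g))ᵀ = 1 + single j i 1 := by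
    rw [hval, Matrix.transpose_add, Matrix.transpose_one, std_transpose]
  have hkey : (A : Mg g) * B * ((A : Mg g))ᵀ - B
      = single i j c + single j i c + single i i c := by
    rw [hvalT, hval, hB]
    rw [Matrix.add_mul, Matrix.one_mul, Matrix.single_mul_single_same]
    rw [Matrix.mul_add, Matrix.mul_one]
    rw [Matrix.add_mul, Matrix.single_mul_single_same, Matrix.single_mul_single_same]
    simp only [one_mul, mul_one]
    abel
  have h1 : ((A : Mg g) * B * ((A : Mg g))ᵀ - B) ∈ WSub g := by
    refine ⟨by rw [Matrix.transpose_sub, Matrix.transpose_mul, Matrix.transpose_mul,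
      Matrix.transpose_transpose, hBsym, Matrix.mul_assoc], ?_⟩
    exact uElt_sub_mem A B hBsym _
  rw [hkey] at h1
  have h2 := AddSubgroup.sub_mem (WSub g) h1 (offdiag_mem hg i j hij c)
  rw [show single i j c + single j i c + single i i c
      - (single i j c + single j i c) = (single i i c : Mg g)
    from by abel] at h2
  exact h2

lemma sym_decomp (S : Mg g) (hS : Sᵀ = S) :
    S = (∑ i, single i i (S i i))
      + ∑ p ∈ Finset.univ.filter (fun p : Fin g × Fin g => p.1 < p.2),
          (single p.1 p.2 (S p.1 p.2) + single p.2 p.1 (S p.1 p.2)) := by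
  have hsym : ∀ x y, S y x = S x y := fun x y => congrFun (congrFun hS x) y
  ext a b
  rw [Matrix.add_apply, Matrix.sum_apply, Matrix.sum_apply]
  rcases lt_trichotomy a b with hab | hab | hab
  · have h1 : (∑ i, single i i (S i i) a b) = 0 :=
      Finset.sum_eq_zero fun i _ => Matrix.single_apply_of_ne _ _ _ _ _
        (by rintro ⟨rfl, rfl⟩; exact absurd hab (lt_irrefl _))
    have h2 : (∑ p ∈ Finset.univ.filter (fun p : Fin g × Fin g => p.1 < p.2),
        (single p.1 p.2 (S p.1 p.2) + single p.2 p.1 (S p.1 p.2)) a b)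
        = S a b := by
      rw [Finset.sum_eq_single (a, b)]
      · rw [Matrix.add_apply, Matrix.single_apply_same,
          Matrix.single_apply_of_ne _ _ _ _ _ (by intro hcon; have hba : b = a := hcon.1; rw [hba] at hab; exact lt_irrefl _ hab),
          add_zero]
      · intro p hp hpne
        have hplt := (Finset.mem_filter.mp hp).2
        have e1 : single p.1 p.2 (S p.1 p.2) a b = 0 :=
          Matrix.single_apply_of_ne _ _ _ _ _ (by
            rintro ⟨h1', h2'⟩
            exact hpne (Prod.ext h1' h2'))
        have e2 : single p.2 p.1 (S p.1 p.2) a b = 0 :=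
          Matrix.single_apply_of_ne _ _ _ _ _ (by
            rintro ⟨h1', h2'⟩
            rw [h1', h2'] at hplt
            exact absurd hab (lt_asymm hplt))
        rw [Matrix.add_apply, e1, e2, add_zero]
      · intro h
        exact absurd (show ((a, b) : Fin g × Fin g) ∈ Finset.univ.filter
          (fun p : Fin g × Fin g => p.1 < p.2) from
          Finset.mem_filter.mpr ⟨Finset.mem_univ _, hab⟩) h
    rw [h1, h2, zero_add]
  · have h1 : (∑ i, single i i (S i i) a b) = S a b := by
      rw [Finset.sum_eq_single a]
      · rw [← hab, Matrix.single_apply_same]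
      · intro i _ hia
        exact Matrix.single_apply_of_ne _ _ _ _ _ (by rintro ⟨h', -⟩; exact hia h')
      · intro h; exact absurd (Finset.mem_univ a) h
    have h2 : (∑ p ∈ Finset.univ.filter (fun p : Fin g × Fin g => p.1 < p.2),
        (single p.1 p.2 (S p.1 p.2) + single p.2 p.1 (S p.1 p.2)) a b)
        = 0 := by
      refine Finset.sum_eq_zero fun p hp => ?_
      have hplt := (Finset.mem_filter.mp hp).2
      have e1 : single p.1 p.2 (S p.1 p.2) a b = 0 :=
        Matrix.single_apply_of_ne _ _ _ _ _ (by
          rintro ⟨h1', h2'⟩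
          rw [h1', h2', ← hab] at hplt
          exact absurd hplt (lt_irrefl _))
      have e2 : single p.2 p.1 (S p.1 p.2) a b = 0 :=
        Matrix.single_apply_of_ne _ _ _ _ _ (by
          rintro ⟨h1', h2'⟩
          rw [h1', h2', hab] at hplt
          exact absurd hplt (lt_irrefl _))
      rw [Matrix.add_apply, e1, e2, add_zero]
    rw [h1, h2, add_zero]
  · have h1 : (∑ i, single i i (S i i) a b) = 0 :=
      Finset.sum_eq_zero fun i _ => Matrix.single_apply_of_ne _ _ _ _ _
        (by rintro ⟨rfl, rfl⟩; exact absurd hab (lt_irrefl _))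
    have h2 : (∑ p ∈ Finset.univ.filter (fun p : Fin g × Fin g => p.1 < p.2),
        (single p.1 p.2 (S p.1 p.2) + single p.2 p.1 (S p.1 p.2)) a b)
        = S a b := by
      rw [Finset.sum_eq_single (b, a)]
      · rw [Matrix.add_apply, Matrix.single_apply_same,
          Matrix.single_apply_of_ne _ _ _ _ _ (by intro hcon; have hba : b = a := hcon.1; rw [hba] at hab; exact lt_irrefl _ hab),
          zero_add, hsym]
      · intro p hp hpne
        have hplt := (Finset.mem_filter.mp hp).2
        have e1 : single p.1 p.2 (S p.1 p.2) a b = 0 :=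
          Matrix.single_apply_of_ne _ _ _ _ _ (by
            rintro ⟨h1', h2'⟩
            rw [h1', h2'] at hplt
            exact absurd hab (lt_asymm hplt))
        have e2 : single p.2 p.1 (S p.1 p.2) a b = 0 :=
          Matrix.single_apply_of_ne _ _ _ _ _ (by
            rintro ⟨h1', h2'⟩
            exact hpne (Prod.ext h2' h1'))
        rw [Matrix.add_apply, e1, e2, add_zero]
      · intro h
        exact absurd (show ((b, a) : Fin g × Fin g) ∈ Finset.univ.filter
          (fun p : Fin g × Fin g => p.1 < p.2) from
          Finset.mem_filter.mpr ⟨Finset.mem_univ _, hab⟩) h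
    rw [h1, h2, zero_add]

lemma uElt_mem_commutator (hg : 3 ≤ g) (S : Mg g) (hS : Sᵀ = S) :
    uElt S hS ∈ commutator (urSpGroup g) := by
  have hmem : S ∈ WSub g := by
    rw [sym_decomp S hS]
    refine AddSubgroup.add_mem _ (AddSubgroup.sum_mem _ fun i _ => diag_mem hg i _)
      (AddSubgroup.sum_mem _ fun p hp =>
        offdiag_mem hg p.1 p.2 (ne_of_lt (Finset.mem_filter.mp hp).2) _)
  obtain ⟨h', hC⟩ := hmem
  rw [show uElt S hS = uElt S h' from uElt_congr rfl]
  exact hC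

lemma dGL_tvGL_mem (hg : 3 ≤ g) (i j : Fin g) (hij : i ≠ j) (c : ℤ) :
    dGL (tvGL i j hij c) ∈ commutator (urSpGroup g) := by
  obtain ⟨k, hki, hkj⟩ := exists_third hg i j
  have hik : i ≠ k := Ne.symm hki
  have hmat : (transvection i k c * transvection k j 1 : Mg g)
      = transvection i j c * transvection k j 1 * transvection i k c := by
    rw [trans_exp i k k j c 1, Matrix.single_mul_single_same, mul_one]
    rw [trans_exp i j k j c 1, Matrix.single_mul_single_of_ne c i j _ (Ne.symm hkj) 1, add_zero]
    rw [transvection, Matrix.mul_add, Matrix.mul_one]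
    rw [Matrix.add_mul, Matrix.add_mul, Matrix.one_mul,
      Matrix.single_mul_single_of_ne 1 k j _ (Ne.symm hij) c,
      Matrix.single_mul_single_of_ne c i j _ (Ne.symm hij) c]
    abel
  have h : tvGL i k hik c * tvGL k j hkj 1
      = tvGL i j hij c * (tvGL k j hkj 1 * tvGL i k hik c) := by
    refine Units.ext ?_
    show (transvection i k c * transvection k j 1 : Mg g)
      = transvection i j c * (transvection k j 1 * transvection i k c)
    rw [hmat, Matrix.mul_assoc]
  have h2 : ⁅tvGL i k hik c, tvGL k j hkj 1⁆ * (tvGL k j hkj 1 * tvGL i k hik c)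
      = tvGL i k hik c * tvGL k j hkj 1 := by
    rw [commutatorElement_def]; group
  have hunit : tvGL i j hij c = ⁅tvGL i k hik c, tvGL k j hkj 1⁆ :=
    (mul_right_cancel (h2.trans h)).symm
  rw [hunit, map_commutatorElement, commutator_def]
  exact Subgroup.commutator_mem_commutator (Subgroup.mem_top _) (Subgroup.mem_top _)

lemma dGL_mem_commutator (hg : 3 ≤ g) (A : GL (Fin g) ℤ) (hdet : (A : Mg g).det = 1) :
    dGL A ∈ commutator (urSpGroup g) := by
  have hA := mem_closure_TvS_univ A hdet
  clear hdet
  induction hA using Subgroup.closure_induction with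
  | mem t ht =>
    obtain ⟨i, j, hij, c, -, -, rfl⟩ := ht
    exact dGL_tvGL_mem hg i j hij c
  | one => rw [_root_.map_one]; exact Subgroup.one_mem _
  | mul x y _ _ hx hy => rw [_root_.map_mul]; exact Subgroup.mul_mem _ hx hy
  | inv x _ hx => rw [_root_.map_inv]; exact Subgroup.inv_mem _ hx

lemma mem_commutator_of_detul (hg : 3 ≤ g) (X : urSpGroup g)
    (hdet : (ulBlock X).det = 1) : X ∈ commutator (urSpGroup g) := by
  set M : Matrix (Fin g ⊕ Fin g) (Fin g ⊕ Fin g) ℤ :=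
    ((X : Matrix.GeneralLinearGroup (Fin g ⊕ Fin g) ℤ) : Matrix (Fin g ⊕ Fin g) (Fin g ⊕ Fin g) ℤ)
    with hM
  set A : Mg g := M.toBlocks₁₁ with hA
  set B : Mg g := M.toBlocks₁₂ with hBd
  set D : Mg g := M.toBlocks₂₂ with hD
  have h21 : M.toBlocks₂₁ = 0 := X.2.2
  have hMblocks : M = Matrix.fromBlocks A B 0 D := by
    conv_lhs => rw [← Matrix.fromBlocks_toBlocks M]
    rw [h21]
  have hsymp : Mᵀ * paperJ g * M = paperJ g := X.2.1
  rw [hMblocks, paperJ_blocks, Matrix.fromBlocks_transpose, Matrix.fromBlocks_multiply,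
    Matrix.fromBlocks_multiply, Matrix.fromBlocks_inj] at hsymp
  obtain ⟨-, h12, h21', h22⟩ := hsymp
  simp only [Matrix.mul_zero, Matrix.zero_mul, Matrix.mul_one, Matrix.one_mul,
    Matrix.transpose_zero, add_zero, zero_add, Matrix.mul_neg, Matrix.neg_mul] at h12 h21' h22
  -- h12 : Aᵀ * D = 1 ; h21' : -(Dᵀ * A) = -1 ; h22 : -(Dᵀ * B) + Bᵀ * D = 0
  have hDA : Dᵀ * A = 1 := by
    have := h21'
    rwa [neg_inj] at this
  have hADt : A * Dᵀ = 1 := mul_eq_one_comm.mp hDA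
  have hBDsym : Bᵀ * D = Dᵀ * B := by linear_combination (norm := abel) h22
  set AGL : GL (Fin g) ℤ := ⟨A, Dᵀ, hADt, hDA⟩ with hAGL
  set S : Mg g := Dᵀ * B with hS
  have hSsym : Sᵀ = S := by
    rw [hS, Matrix.transpose_mul, Matrix.transpose_transpose, hBDsym]
  have hXdecomp : X = dGL AGL * uElt S hSsym := by
    apply urSp_ext
    show M = Matrix.fromBlocks ((AGL : Mg g)) 0 0 ((↑AGL⁻¹ : Mg g))ᵀ *
      Matrix.fromBlocks (1 : Mg g) S 0 (1 : Mg g)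
    have hcoe : (AGL : Mg g) = A := rfl
    have hcoeinv : (↑AGL⁻¹ : Mg g) = Dᵀ := rfl
    rw [hcoe, hcoeinv, Matrix.transpose_transpose, Matrix.fromBlocks_multiply]
    rw [hMblocks]
    have hAS : A * S = B := by rw [hS, ← Matrix.mul_assoc, hADt, Matrix.one_mul]
    simp [hAS]
  rw [hXdecomp]
  exact Subgroup.mul_mem _ (dGL_mem_commutator hg AGL hdet) (uElt_mem_commutator hg S hSsym)

/-- `ℤˣ ≃* Multiplicative (ZMod 2)` -/
def unitsIntEquivZMod2 : ℤˣ ≃* Multiplicative (ZMod 2) where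
  toFun u := Multiplicative.ofAdd (if u = 1 then (0 : ZMod 2) else 1)
  invFun x := if x.toAdd = 0 then 1 else -1
  left_inv u := by
    rcases Int.units_eq_one_or u with rfl | rfl <;> decide
  right_inv x := by
    revert x
    decide
  map_mul' u v := by
    rcases Int.units_eq_one_or u with rfl | rfl <;>
      rcases Int.units_eq_one_or v with rfl | rfl <;> decide

end PartC

/-- For `g ≥ 3`, the abelianization of `urSp(2g)` is `ℤ/2ℤ` (realized as `ℤˣ = {±1}`),
the isomorphism being induced by `X ↦ det (ul X)`. -/
theorem stmt13 (g : ℕ) (hg : 3 ≤ g) :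
    ∃ e : Abelianization (urSpGroup g) ≃* ℤˣ,
      (∀ X : urSpGroup g,
        ((e (Abelianization.of X) : ℤˣ) : ℤ) = (urSpGroup.ulBlock X).det) ∧
      Nonempty (Abelianization (urSpGroup g) ≃* Multiplicative (ZMod 2)) := by
  have hg0 : 0 < g := by omega
  set i0 : Fin g := ⟨0, hg0⟩ with hi0
  set Aneg : Mg g := Matrix.diagonal (fun i => if i = i0 then (-1 : ℤ) else 1) with hAnegdef
  have hAneg2 : Aneg * Aneg = 1 := by
    rw [hAnegdef, Matrix.diagonal_mul_diagonal]
    have hfun : (fun i => (if i = i0 then (-1 : ℤ) else 1) *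
        (if i = i0 then (-1 : ℤ) else 1)) = fun _ => (1 : ℤ) :=
      funext fun i => by by_cases h : i = i0 <;> simp [h]
    rw [hfun, Matrix.diagonal_one]
  set AnegGL : GL (Fin g) ℤ := ⟨Aneg, Aneg, hAneg2, hAneg2⟩ with hAnegGL
  have hdetAneg : Aneg.det = -1 := by
    rw [hAnegdef, Matrix.det_diagonal, Finset.prod_eq_single i0 (fun b _ hb => if_neg hb)
      (fun h => absurd (Finset.mem_univ i0) h), if_pos rfl]
  have hul : urSpGroup.ulBlock (dGL AnegGL) = Aneg := by
    show (Matrix.fromBlocks ((AnegGL : Mg g)) 0 0 ((↑AnegGL⁻¹ : Mg g))ᵀ).toBlocks₁₁ = Aneg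
    rw [Matrix.toBlocks_fromBlocks₁₁]
  have hdetul : urSpGroup.detul g (dGL AnegGL) = -1 := by
    apply Units.ext
    show (urSpGroup.ulBlock (dGL AnegGL)).det = ((-1 : ℤˣ) : ℤ)
    rw [hul, hdetAneg]
    rfl
  have hsurj : Function.Surjective (Abelianization.lift (urSpGroup.detul g)) := by
    intro u
    rcases Int.units_eq_one_or u with rfl | rfl
    · exact ⟨1, _root_.map_one _⟩
    · exact ⟨Abelianization.of (dGL AnegGL), by rw [Abelianization.lift_apply_of]; exact hdetul⟩
  have hinj : Function.Injective (Abelianization.lift (urSpGroup.detul g)) := by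
    refine (injective_iff_map_eq_one _).mpr ?_
    intro a
    refine QuotientGroup.induction_on a ?_
    intro X hX
    have h1 : urSpGroup.detul g X = 1 := by
      rw [← Abelianization.lift_apply_of (urSpGroup.detul g) X]
      exact hX
    have h2 : (urSpGroup.ulBlock X).det = 1 := congrArg Units.val h1
    exact (QuotientGroup.eq_one_iff X).mpr (mem_commutator_of_detul hg X h2)
  refine ⟨MulEquiv.ofBijective (Abelianization.lift (urSpGroup.detul g)) ⟨hinj, hsurj⟩,
    fun X => ?_,
    ⟨(MulEquiv.ofBijective (Abelianization.lift (urSpGroup.detul g))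
        ⟨hinj, hsurj⟩).trans unitsIntEquivZMod2⟩⟩
  show (((Abelianization.lift (urSpGroup.detul g)) (Abelianization.of X) : ℤˣ) : ℤ)
    = (urSpGroup.ulBlock X).det
  rw [Abelianization.lift_apply_of]
  rfl
end
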